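/- arXiv:1708.08773 — 6 statements merged into one kernel-verified Lean document; each statement's English description precedes it below -/
import Mathlib

section
/- Let q ≥ 2 be an integer. The continuous group homomorphism Ẑ → ∏_{l prime, l ∤ q} ℤ_l^× determined by sending 1 ∈ ℤ ⊆ Ẑ to the element (q)_l is injective. -/
/-! For a prime `P` and `k ≥ 1`, some prime power `l ^ e` with `l ∤ q` divides `q ^ P ^ k - 1`
but not `q ^ P ^ (k - 1) - 1`, so `q` has order exactly `P ^ k` modulo `l ^ e`. Reducing the
`l`-component of `χ` modulo `l ^ e` gives a continuous character of `Ẑ` taking the value `q` at `1`;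
as `ℕ` is dense in `Ẑ` (Chinese remainder theorem), it must be `y ↦ q ^ (y_P mod P ^ k)`. So every
`x` in the kernel has `x_P ≡ 0 mod P ^ k` for all `P` and `k`, i.e. `x = 0`. -/

instance (p : Nat.Primes) : Fact (p : ℕ).Prime := ⟨p.2⟩

/-- The profinite completion `Ẑ` of `ℤ`, realized as the product `∏_l ℤ_l`
over all primes `l`. -/
abbrev ZHat : Type := ∀ p : Nat.Primes, ℤ_[(p : ℕ)]

/-- The primes not dividing `q`. -/
abbrev PrimesNotDvd (q : ℕ) : Type := {p : Nat.Primes // ¬ ((p : ℕ) ∣ q)}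

open Filter Topology

namespace PadicInt

variable {p : ℕ} [Fact p.Prime]

theorem toZModPow_eq_iff_norm_sub_le (n : ℕ) (x y : ℤ_[p]) :
    toZModPow n x = toZModPow n y ↔ ‖x - y‖ ≤ (p : ℝ) ^ (-n : ℤ) := by
  rw [norm_le_pow_iff_mem_span_pow, ← ker_toZModPow, RingHom.mem_ker, map_sub, sub_eq_zero]

theorem continuous_toZModPow (n : ℕ) : Continuous (toZModPow (p := p) n) := by
  refine continuous_iff_continuousAt.2 fun x => ?_
  rw [ContinuousAt, nhds_discrete (ZMod _), tendsto_pure]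
  have hradius : (0 : ℝ) < (p : ℝ) ^ (-n : ℤ) :=
    zpow_pos (Nat.cast_pos.2 (Fact.out : p.Prime).pos) _
  filter_upwards [Metric.closedBall_mem_nhds x hradius] with y hy
  rwa [toZModPow_eq_iff_norm_sub_le, ← dist_eq_norm]

theorem eventually_toZModPow_eq_subset {x : ℤ_[p]} {t : Set ℤ_[p]} (ht : t ∈ 𝓝 x) :
    ∀ᶠ n in atTop, {y | toZModPow n y = toZModPow n x} ⊆ t := by
  obtain ⟨ε, hε, hball⟩ := Metric.mem_nhds_iff.1 ht
  obtain ⟨m, hm⟩ := exists_pow_neg_lt p hε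
  filter_upwards [eventually_ge_atTop m] with n hn y hy
  refine hball (lt_of_le_of_lt ?_ hm)
  rw [dist_eq_norm, ← toZModPow_eq_iff_norm_sub_le, ← cast_toZModPow m n hn, hy,
    cast_toZModPow m n hn]

end PadicInt

namespace ZHat

theorem exists_natCast_toZModPow_eq (x : ZHat) (I : Finset Nat.Primes) (n : ℕ) :
    ∃ m : ℕ, ∀ p ∈ I, PadicInt.toZModPow n (m : ℤ_[(p : ℕ)]) = PadicInt.toZModPow n (x p) := by
  have hcop : (I : Set Nat.Primes).Pairwise (Function.onFun Nat.Coprime fun p => (p : ℕ) ^ n) :=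
    fun p _ r _ hpr => Nat.Coprime.pow n n <| (Nat.coprime_primes p.2 r.2).2 <|
      Subtype.coe_injective.ne hpr
  obtain ⟨m, hm⟩ := Nat.chineseRemainderOfFinset (fun p => (PadicInt.toZModPow n (x p)).val)
    (fun p => (p : ℕ) ^ n) I (fun p _ => pow_ne_zero n p.2.ne_zero) hcop
  refine ⟨m, fun p hp => ?_⟩
  rw [map_natCast, (ZMod.natCast_eq_natCast_iff _ _ _).2 (hm p hp), ZMod.natCast_zmod_val]

theorem denseRange_natCast : DenseRange (Nat.cast : ℕ → ZHat) := by
  intro x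
  rw [mem_closure_iff_nhds]
  intro t ht
  rw [nhds_pi, Filter.mem_pi'] at ht
  obtain ⟨I, s, hs, hIs⟩ := ht
  obtain ⟨n, hn⟩ := ((Filter.eventually_all_finset I).2 fun p _ =>
    PadicInt.eventually_toZModPow_eq_subset (hs p)).exists
  obtain ⟨m, hm⟩ := exists_natCast_toZModPow_eq x I n
  exact ⟨m, hIs fun p hp => hn p hp (hm p hp), m, rfl⟩

theorem map_eq_pow_toZModPow_val {M : Type*} [Monoid M] [TopologicalSpace M] [DiscreteTopology M]
    (φ : Multiplicative ZHat →* M) (hφ : Continuous φ) (P : Nat.Primes) (k : ℕ)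
    (hφP : φ (Multiplicative.ofAdd 1) ^ ((P : ℕ) ^ k) = 1) (y : Multiplicative ZHat) :
    φ y = φ (Multiplicative.ofAdd 1) ^ (PadicInt.toZModPow k (Multiplicative.toAdd y P)).val := by
  suffices (fun z : ZHat => φ (Multiplicative.ofAdd z)) =
      fun z => φ (Multiplicative.ofAdd 1) ^ (PadicInt.toZModPow k (z P)).val from
    congrFun this (Multiplicative.toAdd y)
  refine denseRange_natCast.equalizer (hφ.comp continuous_ofAdd)
    ((continuous_of_discreteTopology (f := fun s : ZMod ((P : ℕ) ^ k) =>
      φ (Multiplicative.ofAdd 1) ^ s.val)).comp ((PadicInt.continuous_toZModPow k).comp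
      (continuous_apply P))) (funext fun m => ?_)
  change φ (Multiplicative.ofAdd (m : ZHat)) = _ ^ (PadicInt.toZModPow k ((m : ZHat) P)).val
  rw [Pi.natCast_apply, map_natCast (PadicInt.toZModPow k), ZMod.val_natCast,
    ← pow_eq_pow_mod m hφP, ← nsmul_one, ofAdd_nsmul, map_pow]

end ZHat

theorem ZMod.eq_zero_of_pow_val_eq_one {M : Type*} [Monoid M] {u : M} {n : ℕ} [NeZero n]
    (hu : orderOf u = n) {s : ZMod n} (h : u ^ s.val = 1) : s = 0 := by
  have hdvd := orderOf_dvd_of_pow_eq_one h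
  rw [hu] at hdvd
  exact (ZMod.val_eq_zero s).1 (Nat.eq_zero_of_dvd_of_lt hdvd s.val_lt)

theorem exists_orderOf_natCast_eq_prime_pow (P : ℕ) [hP : Fact P.Prime] {q : ℕ} (hq : 2 ≤ q)
    (k : ℕ) : ∃ l e : ℕ, l.Prime ∧ ¬ l ∣ q ∧ orderOf (q : ZMod (l ^ e)) = P ^ (k + 1) := by
  have hpow_eq_one (m N : ℕ) : (q : ZMod m) ^ N = 1 ↔ m ∣ q ^ N - 1 := by
    rw [← Nat.cast_pow, ← Nat.cast_one, ZMod.natCast_eq_natCast_iff, Nat.ModEq.comm,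
      Nat.modEq_iff_dvd' (Nat.one_le_pow _ _ (by omega))]
  have hlt : q ^ P ^ k < q ^ P ^ (k + 1) :=
    Nat.pow_lt_pow_right (by omega) (Nat.pow_lt_pow_right hP.out.one_lt k.lt_succ_self)
  have hgt : 1 < q ^ P ^ k := Nat.one_lt_pow (pow_ne_zero _ hP.out.ne_zero) (by omega)
  obtain ⟨l, e, hl, hdvd, hndvd⟩ :
      ∃ l e, l.Prime ∧ l ^ e ∣ q ^ P ^ (k + 1) - 1 ∧ ¬ l ^ e ∣ q ^ P ^ k - 1 := by
    have h : ¬ q ^ P ^ (k + 1) - 1 ∣ q ^ P ^ k - 1 := fun h => by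
      have := Nat.le_of_dvd (by omega) h
      omega
    rw [Nat.dvd_iff_prime_pow_dvd_dvd] at h
    push Not at h
    exact h
  have hfin : (q : ZMod (l ^ e)) ^ P ^ (k + 1) = 1 := (hpow_eq_one _ _).2 hdvd
  refine ⟨l, e, hl, ?_, orderOf_eq_prime_pow (mt (hpow_eq_one _ _).1 hndvd) hfin⟩
  have he : e ≠ 0 := by
    rintro rfl
    exact hndvd (by simp)
  have hunit : IsUnit (q : ZMod (l ^ e)) := IsUnit.of_pow_eq_one hfin (pow_ne_zero _ hP.out.ne_zero)
  exact (Nat.Prime.coprime_iff_not_dvd hl).1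
    (((ZMod.isUnit_iff_coprime q _).1 hunit).coprime_dvd_right (dvd_pow_self l he)).symm

/-- Let `q ≥ 2`.  Any continuous group homomorphism `Ẑ → ∏_{l ∤ q} ℤ_l^×` sending
`1 ∈ ℤ ⊆ Ẑ` to the element `(q)_l` is injective (injectivity of the prime-to-`q`
cyclotomic character of a finite field with `q` elements). -/
theorem cyclotomic_character_injective (q : ℕ) (hq : 2 ≤ q)
    (χ : Multiplicative ZHat →* ∀ l : PrimesNotDvd q, (ℤ_[((l : Nat.Primes) : ℕ)])ˣ)
    (hcont : Continuous χ)
    (hχ : ∀ l : PrimesNotDvd q,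
      ((χ (Multiplicative.ofAdd (1 : ZHat)) l : ℤ_[((l : Nat.Primes) : ℕ)])) =
        (q : ℤ_[((l : Nat.Primes) : ℕ)])) :
    Function.Injective χ := by
  refine (injective_iff_map_eq_one χ).2 fun x hx => ?_
  suffices h : ∀ (P : Nat.Primes) (k : ℕ),
      PadicInt.toZModPow (k + 1) (Multiplicative.toAdd x P) = 0 by
    refine Multiplicative.toAdd.injective (funext fun P => PadicInt.ext_of_toZModPow.1 fun n => ?_)
    rw [← PadicInt.cast_toZModPow n (n + 1) n.le_succ, h]
    simp
  intro P k
  obtain ⟨l, e, hl, hlq, hord⟩ := exists_orderOf_natCast_eq_prime_pow P hq k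
  have : Fact l.Prime := ⟨hl⟩
  let L : PrimesNotDvd q := ⟨⟨l, hl⟩, hlq⟩
  let φ : Multiplicative ZHat →* ZMod (l ^ e) := (PadicInt.toZModPow (p := l) e).toMonoidHom.comp
    ((Units.coeHom _).comp ((Pi.evalMonoidHom _ L).comp χ))
  have hφ_one : φ (Multiplicative.ofAdd 1) = q := by simp [φ, hχ L]
  have hφ_cont : Continuous φ := (PadicInt.continuous_toZModPow e).comp
    (Units.continuous_val.comp ((continuous_apply L).comp hcont))
  have hφx := ZHat.map_eq_pow_toZModPow_val φ hφ_cont P (k + 1)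
    (by rw [hφ_one, ← hord, pow_orderOf_eq_one]) x
  rw [hφ_one, show φ x = 1 by simp [φ, hx]] at hφx
  exact ZMod.eq_zero_of_pow_val_eq_one hord hφx.symm
end

section
/- Let k be an infinite field, R a commutative k-algebra which is an integral domain, and H a subgroup of R^× containing k^×. Assume: (a) for every f ∈ R, for all but finitely many c ∈ k, f − c ∈ R^×; and (b) for every f ∈ H with 1 + f ∈ R^×, one has 1 + f ∈ H. Then for every f in the additive subgroup ⟨H⟩ of R generated by H, for all but finitely many c ∈ k one has f − c ∈ H; in particular ⟨H⟩ = k + H. -/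
/-! As `H` is a group, condition (b) upgrades to: if `u, v ∈ H` and `u + v` is a unit, then
`u + v = v (1 + v⁻¹u) ∈ H`. For `f ∈ R` let `E(f) ⊆ k` be the set of `c` with `f - c ∉ H`.
The `f` with `E(f)` finite form an additive subgroup containing `H`: for `u ∈ H` and `c ≠ 0`,
`u - c` is a sum of two elements of `H` (as `k^× ⊆ H`), hence lies in `H` as soon as it is a
unit, which (a) guarantees for almost all `c`; for a sum `f + g`, fix `c₀ ∉ E(g)` (possible as
`k` is infinite) and write `f + g - c = (f - (c - c₀)) + (g - c₀)`. Choosing any `c ∉ E(f)`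
then gives `⟨H⟩ = k + H`. -/

open Set Pointwise

section Ring

variable {R : Type*} [Ring R] {H : Subgroup Rˣ}

theorem mem_of_val_eq_add (hb : ∀ u ∈ H, ∀ v : Rˣ, (v : R) = 1 + (u : R) → v ∈ H)
    {u v w : Rˣ} (hu : u ∈ H) (hv : v ∈ H) (hw : (w : R) = u + v) : w ∈ H := by
  have hvw : ((v⁻¹ * w : Rˣ) : R) = 1 + ((v⁻¹ * u : Rˣ) : R) := by
    simp only [Units.val_mul, hw, mul_add, Units.inv_mul, add_comm]
  simpa using H.mul_mem hv (hb _ (H.mul_mem (H.inv_mem hv) hu) _ hvw)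

end Ring

section Algebra

variable (k : Type*) {R : Type*} [Field k] [Ring R] [Algebra k R] (H : Subgroup Rˣ)

def shiftExceptions (f : R) : Set k :=
  {c : k | ¬ ∃ u ∈ H, (u : R) = f - algebraMap k R c}

variable {k H}

theorem mem_shiftExceptions {f : R} {c : k} :
    c ∈ shiftExceptions k H f ↔ ¬ ∃ u ∈ H, (u : R) = f - algebraMap k R c :=
  Iff.rfl

theorem shiftExceptions_zero_subset
    (hk : ∀ c : k, c ≠ 0 → ∃ u ∈ H, (u : R) = algebraMap k R c) :
    shiftExceptions k H (0 : R) ⊆ {0} := by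
  intro c hc
  by_contra h0
  obtain ⟨u, hu, hu_eq⟩ := hk _ (neg_ne_zero.mpr h0)
  exact hc ⟨u, hu, by rw [hu_eq, map_neg, zero_sub]⟩

theorem shiftExceptions_neg
    (hk : ∀ c : k, c ≠ 0 → ∃ u ∈ H, (u : R) = algebraMap k R c) (f : R) :
    shiftExceptions k H (-f) = -shiftExceptions k H f := by
  obtain ⟨m, hm, hm_eq⟩ := hk _ (neg_ne_zero.mpr one_ne_zero)
  have hneg : ∀ (g : R) (c : k), (∃ u ∈ H, (u : R) = g - algebraMap k R c) →
      ∃ u ∈ H, (u : R) = -g - algebraMap k R (-c) := by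
    rintro g c ⟨u, hu, hu_eq⟩
    refine ⟨m * u, H.mul_mem hm hu, ?_⟩
    rw [Units.val_mul, hm_eq, hu_eq, map_neg, map_neg, map_one]
    noncomm_ring
  ext c
  simp only [Set.mem_neg, mem_shiftExceptions, not_iff_not]
  constructor
  · simpa using hneg (-f) c
  · simpa using hneg f (-c)

theorem shiftExceptions_val_subset (hk : ∀ c : k, c ≠ 0 → ∃ u ∈ H, (u : R) = algebraMap k R c)
    (hb : ∀ u ∈ H, ∀ v : Rˣ, (v : R) = 1 + (u : R) → v ∈ H) {u : Rˣ} (hu : u ∈ H) :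
    shiftExceptions k H (u : R) ⊆ {0} ∪ {c | ¬ IsUnit ((u : R) - algebraMap k R c)} := by
  intro c hc
  by_cases h0 : c = 0
  · exact Or.inl h0
  refine Or.inr fun hunit => hc ?_
  obtain ⟨m, hm, hm_eq⟩ := hk _ (neg_ne_zero.mpr h0)
  refine ⟨hunit.unit, mem_of_val_eq_add hb hu hm ?_, hunit.unit_spec⟩
  rw [IsUnit.unit_spec, hm_eq, map_neg, sub_eq_add_neg]

theorem shiftExceptions_add_subset
    (hb : ∀ u ∈ H, ∀ v : Rˣ, (v : R) = 1 + (u : R) → v ∈ H) {f g : R} {c₀ : k}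
    (hc₀ : c₀ ∉ shiftExceptions k H g) :
    shiftExceptions k H (f + g) ⊆
      (· + c₀) '' shiftExceptions k H f ∪ {c | ¬ IsUnit (f + g - algebraMap k R c)} := by
  intro c hc
  by_contra hcon
  simp only [Set.mem_union, Set.mem_image, Set.mem_ofPred_eq, not_or, not_not] at hcon
  obtain ⟨hc_shift, hunit⟩ := hcon
  obtain ⟨v, hv, hv_eq⟩ := not_not.mp hc₀
  obtain ⟨u, hu, hu_eq⟩ : ∃ u ∈ H, (u : R) = f - algebraMap k R (c - c₀) :=
    not_not.mp fun h => hc_shift ⟨c - c₀, h, sub_add_cancel c c₀⟩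
  refine hc ⟨hunit.unit, mem_of_val_eq_add hb hu hv ?_, hunit.unit_spec⟩
  rw [IsUnit.unit_spec, hu_eq, hv_eq, map_sub]
  abel

theorem shiftExceptions_finite_of_mem_closure [Infinite k]
    (hk : ∀ c : k, c ≠ 0 → ∃ u ∈ H, (u : R) = algebraMap k R c)
    (hb : ∀ u ∈ H, ∀ v : Rˣ, (v : R) = 1 + (u : R) → v ∈ H)
    (ha : ∀ f : R, {c : k | ¬ IsUnit (f - algebraMap k R c)}.Finite) {f : R}
    (hf : f ∈ AddSubgroup.closure (Units.val '' (H : Set Rˣ))) :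
    (shiftExceptions k H f).Finite := by
  induction hf using AddSubgroup.closure_induction with
  | mem x hx =>
    obtain ⟨u, hu, rfl⟩ := hx
    exact ((finite_singleton 0).union (ha u)).subset (shiftExceptions_val_subset hk hb hu)
  | zero => exact (finite_singleton 0).subset (shiftExceptions_zero_subset hk)
  | add x y _ _ hx hy =>
    obtain ⟨c₀, hc₀⟩ := hy.infinite_compl.nonempty
    exact ((hx.image _).union (ha (x + y))).subset (shiftExceptions_add_subset hb hc₀)
  | neg x _ hx => rwa [shiftExceptions_neg hk, finite_neg]

end Algebra

theorem addClosure_subgroup_eq_add_general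
    (k R : Type*) [Field k] [Infinite k] [CommRing R] [Algebra k R]
    (H : Subgroup Rˣ)
    (hkH : ∀ (c : k) (hc : c ≠ 0),
      (Units.map (algebraMap k R).toMonoidHom) (Units.mk0 c hc) ∈ H)
    (ha : ∀ f : R, {c : k | ¬ IsUnit (f - algebraMap k R c)}.Finite)
    (hb : ∀ u ∈ H, ∀ v : Rˣ, (v : R) = 1 + (u : R) → v ∈ H) :
    (∀ f ∈ AddSubgroup.closure ((fun u : Rˣ => (u : R)) '' (H : Set Rˣ)),
      {c : k | ¬ ∃ u ∈ H, (u : R) = f - algebraMap k R c}.Finite) ∧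
    (∀ f : R, f ∈ AddSubgroup.closure ((fun u : Rˣ => (u : R)) '' (H : Set Rˣ)) ↔
      ∃ (c : k), ∃ u ∈ H, f = algebraMap k R c + (u : R)) := by
  have hfinite := fun f => shiftExceptions_finite_of_mem_closure (f := f)
    (fun c hc => ⟨_, hkH c hc, rfl⟩) hb ha
  refine ⟨hfinite, fun f => ⟨fun hf => ?_, ?_⟩⟩
  · obtain ⟨c, hc⟩ := (hfinite f hf).infinite_compl.nonempty
    obtain ⟨u, hu, hu_eq⟩ := not_not.mp hc
    exact ⟨c, u, hu, by rw [hu_eq, add_sub_cancel]⟩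
  · rintro ⟨c, u, hu, rfl⟩
    refine add_mem ?_ (AddSubgroup.subset_closure ⟨u, hu, rfl⟩)
    by_cases hc : c = 0
    · rw [hc, map_zero]
      exact zero_mem _
    · exact AddSubgroup.subset_closure ⟨_, hkH c hc, rfl⟩

/-- Let `k` be an infinite field, `R` a commutative `k`-algebra which is an integral
domain, and `H ≤ R^×` a subgroup containing `k^×`.  Assume (a) for every `f ∈ R`, for all
but finitely many `c ∈ k`, `f - c ∈ R^×`; and (b) for every `f ∈ H` with `1 + f ∈ R^×`
one has `1 + f ∈ H`.  Then for every `f` in the additive subgroup `⟨H⟩` generated by `H`,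
for all but finitely many `c ∈ k` one has `f - c ∈ H`; in particular `⟨H⟩ = k + H`. -/
theorem addClosure_subgroup_eq_add
    (k R : Type*) [Field k] [Infinite k] [CommRing R] [IsDomain R] [Algebra k R]
    (H : Subgroup Rˣ)
    (hkH : ∀ (c : k) (hc : c ≠ 0),
      (Units.map (algebraMap k R).toMonoidHom) (Units.mk0 c hc) ∈ H)
    (ha : ∀ f : R, {c : k | ¬ IsUnit (f - algebraMap k R c)}.Finite)
    (hb : ∀ u ∈ H, ∀ v : Rˣ, (v : R) = 1 + (u : R) → v ∈ H) :
    (∀ f ∈ AddSubgroup.closure ((fun u : Rˣ => (u : R)) '' (H : Set Rˣ)),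
      {c : k | ¬ ∃ u ∈ H, (u : R) = f - algebraMap k R c}.Finite) ∧
    (∀ f : R, f ∈ AddSubgroup.closure ((fun u : Rˣ => (u : R)) '' (H : Set Rˣ)) ↔
      ∃ (c : k), ∃ u ∈ H, f = algebraMap k R c + (u : R)) :=
  addClosure_subgroup_eq_add_general k R H hkH ha hb
end

section
/- Let k be an infinite field, R a commutative k-algebra which is an integral domain, and H a subgroup of R^× containing k^×, satisfying: (a) for every f ∈ R, for all but finitely many c ∈ k, f − c ∈ R^×; and (b) for every f ∈ H with 1 + f ∈ R^×, one has 1 + f ∈ H. Then the additive subgroup ⟨H⟩ generated by H is a k-subalgebra of R, and ⟨H⟩ ∩ R^× = H; in particular the group of units of the ring ⟨H⟩ equals H. -/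
/-!
Condition (b) makes `H` closed under every sum that is a unit: `u + v = v * (1 + u * v⁻¹)`.
Given `u, v ∈ H`, condition (a) and the infinitude of `k` provide `c ≠ 0` with `v - c` and
`u + v - c` both units; then `v - c ∈ H` and `u + v = c + (u + (v - c))` with `u + (v - c) ∈ H`.
Hence every element of `⟨H⟩` has the form `c + u` with `c ∈ k`, `u ∈ H`, and such an element,
if it is a unit, lies in `H` by the same closure property. `⟨H⟩` is a ring because `H` is
multiplicatively closed.
-/

open Set

theorem Subring.coe_closure_submonoid {R : Type*} [Ring R] (M : Submonoid R) :
    (Subring.closure (M : Set R) : Set R) = AddSubgroup.closure (M : Set R) := by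
  ext x
  rw [SetLike.mem_coe, SetLike.mem_coe, Subring.mem_closure_iff, Submonoid.closure_eq]

theorem Subalgebra.exists_coe_eq_addSubgroupClosure {k R : Type*} [CommSemiring k] [Ring R]
    [Algebra k R] (M : Submonoid R)
    (hM : ∀ c : k, algebraMap k R c ∈ AddSubgroup.closure (M : Set R)) :
    ∃ S : Subalgebra k R, (S : Set R) = AddSubgroup.closure (M : Set R) :=
  ⟨{ Subring.closure (M : Set R) with
      algebraMap_mem' := fun c =>
        (Set.ext_iff.1 (Subring.coe_closure_submonoid M) _).2 (hM c) },
    Subring.coe_closure_submonoid M⟩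

namespace Subgroup

variable {R : Type*} [CommRing R] {H : Subgroup Rˣ}

theorem mem_of_val_eq_add (hb : ∀ u ∈ H, ∀ v : Rˣ, (v : R) = 1 + (u : R) → v ∈ H)
    {u v w : Rˣ} (hu : u ∈ H) (hv : v ∈ H) (hw : (w : R) = u + v) : w ∈ H := by
  have hwv : w * v⁻¹ ∈ H := hb (u * v⁻¹) (mul_mem hu (inv_mem hv)) _ <| by
    rw [Units.val_mul, Units.val_mul, hw, add_mul, Units.mul_inv, add_comm]
  simpa using mul_mem hwv hv

variable {k : Type*} [Field k] [Algebra k R]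

theorem algebraMap_mem_addClosure
    (hkH : ∀ (c : k) (hc : c ≠ 0), Units.map (algebraMap k R).toMonoidHom (Units.mk0 c hc) ∈ H)
    (c : k) : algebraMap k R c ∈ AddSubgroup.closure ((fun u : Rˣ => (u : R)) '' H) := by
  rcases eq_or_ne c 0 with rfl | hc
  · simp
  · exact AddSubgroup.subset_closure ⟨_, hkH c hc, rfl⟩

theorem exists_val_add_val_eq_algebraMap_add [Infinite k]
    (hkH : ∀ (c : k) (hc : c ≠ 0), Units.map (algebraMap k R).toMonoidHom (Units.mk0 c hc) ∈ H)
    (ha : ∀ f : R, {c : k | ¬ IsUnit (f - algebraMap k R c)}.Finite)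
    (hb : ∀ u ∈ H, ∀ v : Rˣ, (v : R) = 1 + (u : R) → v ∈ H) {u v : Rˣ} (hu : u ∈ H) (hv : v ∈ H) :
    ∃ c : k, ∃ w ∈ H, (u + v : R) = algebraMap k R c + w := by
  obtain ⟨c, hc⟩ := (((ha v).union (ha (u + v))).union (finite_singleton 0)).infinite_compl.nonempty
  simp only [mem_compl_iff, mem_union, mem_ofPred_eq, mem_singleton_iff, not_or, not_not] at hc
  obtain ⟨⟨hvc, huvc⟩, hc0⟩ := hc
  have hvcH : hvc.unit ∈ H :=
    mem_of_val_eq_add hb hv (hkH (-c) (neg_ne_zero.2 hc0)) (by simp [sub_eq_add_neg])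
  refine ⟨c, huvc.unit, mem_of_val_eq_add hb hu hvcH ?_, ?_⟩
  · rw [IsUnit.unit_spec, IsUnit.unit_spec]
    ring
  · rw [IsUnit.unit_spec]
    ring

theorem exists_eq_algebraMap_add_of_mem_addClosure [Infinite k]
    (hkH : ∀ (c : k) (hc : c ≠ 0), Units.map (algebraMap k R).toMonoidHom (Units.mk0 c hc) ∈ H)
    (ha : ∀ f : R, {c : k | ¬ IsUnit (f - algebraMap k R c)}.Finite)
    (hb : ∀ u ∈ H, ∀ v : Rˣ, (v : R) = 1 + (u : R) → v ∈ H) {f : R}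
    (hf : f ∈ AddSubgroup.closure ((fun u : Rˣ => (u : R)) '' H)) :
    ∃ c : k, ∃ u ∈ H, f = algebraMap k R c + u := by
  induction hf using AddSubgroup.closure_induction with
  | mem _ hx =>
    obtain ⟨u, hu, rfl⟩ := hx
    exact ⟨0, u, hu, by simp⟩
  | zero => exact ⟨-1, 1, one_mem H, by simp⟩
  | add _ _ _ _ ihx ihy =>
    obtain ⟨c, u, hu, rfl⟩ := ihx
    obtain ⟨d, v, hv, rfl⟩ := ihy
    obtain ⟨e, w, hw, huv⟩ := exists_val_add_val_eq_algebraMap_add hkH ha hb hu hv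
    exact ⟨c + d + e, w, hw, by simp only [map_add]; linear_combination huv⟩
  | neg _ _ ih =>
    obtain ⟨c, u, hu, rfl⟩ := ih
    refine ⟨-c, _, mul_mem hu (hkH (-1) (by norm_num)), ?_⟩
    simp [add_comm]

theorem mem_of_isUnit_of_mem_addClosure [Infinite k]
    (hkH : ∀ (c : k) (hc : c ≠ 0), Units.map (algebraMap k R).toMonoidHom (Units.mk0 c hc) ∈ H)
    (ha : ∀ f : R, {c : k | ¬ IsUnit (f - algebraMap k R c)}.Finite)
    (hb : ∀ u ∈ H, ∀ v : Rˣ, (v : R) = 1 + (u : R) → v ∈ H) {f : R}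
    (hf : f ∈ AddSubgroup.closure ((fun u : Rˣ => (u : R)) '' H)) (hfu : IsUnit f) :
    ∃ u ∈ H, (u : R) = f := by
  obtain ⟨c, u, hu, rfl⟩ := exists_eq_algebraMap_add_of_mem_addClosure hkH ha hb hf
  rcases eq_or_ne c 0 with rfl | hc
  · exact ⟨u, hu, by simp⟩
  · exact ⟨hfu.unit, mem_of_val_eq_add hb (hkH c hc) hu hfu.unit_spec, hfu.unit_spec⟩

end Subgroup

theorem addClosure_subgroup_isSubalgebra_and_units_general
    (k R : Type*) [Field k] [Infinite k] [CommRing R] [Algebra k R]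
    (H : Subgroup Rˣ)
    (hkH : ∀ (c : k) (hc : c ≠ 0),
      (Units.map (algebraMap k R).toMonoidHom) (Units.mk0 c hc) ∈ H)
    (ha : ∀ f : R, {c : k | ¬ IsUnit (f - algebraMap k R c)}.Finite)
    (hb : ∀ u ∈ H, ∀ v : Rˣ, (v : R) = 1 + (u : R) → v ∈ H) :
    (∃ S : Subalgebra k R,
      (S : Set R) = (AddSubgroup.closure ((fun u : Rˣ => (u : R)) '' (H : Set Rˣ)) : Set R)) ∧
    (∀ f : R,
      (f ∈ AddSubgroup.closure ((fun u : Rˣ => (u : R)) '' (H : Set Rˣ)) ∧ IsUnit f) ↔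
        ∃ u ∈ H, (u : R) = f) :=
  ⟨Subalgebra.exists_coe_eq_addSubgroupClosure (H.toSubmonoid.map (Units.coeHom R))
      (Subgroup.algebraMap_mem_addClosure hkH),
    fun _ => ⟨fun ⟨hf, hfu⟩ => Subgroup.mem_of_isUnit_of_mem_addClosure hkH ha hb hf hfu,
      fun ⟨u, hu, hfu⟩ => ⟨AddSubgroup.subset_closure ⟨u, hu, hfu⟩, hfu ▸ u.isUnit⟩⟩⟩

/-- Let `k` be an infinite field, `R` a commutative `k`-algebra which is an integral
domain, and `H ≤ R^×` a subgroup containing `k^×`, satisfying: (a) for every `f ∈ R`, for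
all but finitely many `c ∈ k`, `f - c ∈ R^×`; and (b) for every `f ∈ H` with
`1 + f ∈ R^×` one has `1 + f ∈ H`.  Then the additive subgroup `⟨H⟩` generated by `H` is
a `k`-subalgebra of `R`, and `⟨H⟩ ∩ R^× = H`: the units of the ring `⟨H⟩` are exactly the
elements of `H`. -/
theorem addClosure_subgroup_isSubalgebra_and_units
    (k R : Type*) [Field k] [Infinite k] [CommRing R] [IsDomain R] [Algebra k R]
    (H : Subgroup Rˣ)
    (hkH : ∀ (c : k) (hc : c ≠ 0),
      (Units.map (algebraMap k R).toMonoidHom) (Units.mk0 c hc) ∈ H)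
    (ha : ∀ f : R, {c : k | ¬ IsUnit (f - algebraMap k R c)}.Finite)
    (hb : ∀ u ∈ H, ∀ v : Rˣ, (v : R) = 1 + (u : R) → v ∈ H) :
    (∃ S : Subalgebra k R,
      (S : Set R) = (AddSubgroup.closure ((fun u : Rˣ => (u : R)) '' (H : Set Rˣ)) : Set R)) ∧
    (∀ f : R,
      (f ∈ AddSubgroup.closure ((fun u : Rˣ => (u : R)) '' (H : Set Rˣ)) ∧ IsUnit f) ↔
        ∃ u ∈ H, (u : R) = f) :=
  addClosure_subgroup_isSubalgebra_and_units_general k R H hkH ha hb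
end

section
/- Let p be a prime and A an abelian group such that A/pA is infinite. Let B ≤ A be a subgroup such that A/B is a torsion group whose p-primary component embeds into (ℚ_p/ℤ_p)^n for some n ≥ 0. Then the image of B in A/pA is infinite; in particular B is not contained in pA. -/
/-!
Every `p ^ k`-torsion subgroup of `A ⧸ B` lies in the `p`-primary component, hence embeds into
the finite `p ^ k`-torsion of `(ℚ_p/ℤ_p)^n`. For a torsion group `M` whose `p ^ k`-torsion
subgroups `M[p^k]` are all finite, `M/pM` is finite: each class of `M/pM` comes from some
`M[p^k]`, and the image of `M[p^k]` in `M/pM` has at most `|M[p]|` elements. Applied to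
`M = A ⧸ B` this says that `B + pA` has finite index in `A`, so the image of `B` has finite
index in the infinite group `A/pA`, and is therefore infinite.
-/

open AddSubgroup

lemma finite_of_monotone_cover_of_ncard_le {α : Type*} {s : ℕ → Set α} (hmono : Monotone s)
    (hcover : ∀ x, ∃ k, x ∈ s k) (hfin : ∀ k, (s k).Finite) {c : ℕ} (hc : ∀ k, (s k).ncard ≤ c) :
    Finite α := by
  by_contra hinf
  rw [not_finite_iff_infinite] at hinf
  obtain ⟨t, ht⟩ := Infinite.exists_subset_card_eq α (c + 1)
  obtain ⟨K, hK⟩ := hmono.directed_le.exists_mem_subset_of_finset_subset_biUnion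
    (s := t) fun x _ => Set.mem_iUnion.mpr (hcover x)
  have := calc c + 1 = (t : Set α).ncard := by rw [Set.ncard_coe_finset, ht]
    _ ≤ (s K).ncard := Set.ncard_le_ncard hK (hfin K)
    _ ≤ c := hc K
  omega

lemma AddSubgroup.card_eq_card_map_mul_card_ker_inf {G H : Type*} [AddGroup G] [AddGroup H]
    (K : AddSubgroup G) (f : G →+ H) : Nat.card K = Nat.card (K.map f) * Nat.card ↥(f.ker ⊓ K) := by
  rw [← relIndex_ker, ← inf_relIndex_right, ← relIndex_bot_left, ← relIndex_bot_left,
    ← relIndex_mul_relIndex _ _ _ bot_le inf_le_right, mul_comm]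

section Torsion

variable {M : Type*} [AddCommGroup M]

lemma monotone_ker_pow_nsmul (p : ℕ) : Monotone fun k => (p ^ k • AddMonoidHom.id M).ker := by
  intro k l hkl x (hx : p ^ k • x = 0)
  change p ^ l • x = 0
  rw [← Nat.sub_add_cancel hkl, pow_add, mul_smul, hx, smul_zero]

lemma range_nsmul_inf_ker_pow_nsmul (p k : ℕ) :
    (p • AddMonoidHom.id M).range ⊓ (p ^ k • AddMonoidHom.id M).ker =
      (p ^ (k + 1) • AddMonoidHom.id M).ker.map (p • AddMonoidHom.id M) := by
  ext x
  constructor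
  · rintro ⟨⟨y, rfl⟩, hy : p ^ k • p • y = 0⟩
    exact ⟨y, by simpa [pow_succ, mul_smul] using hy, rfl⟩
  · rintro ⟨y, hy : p ^ (k + 1) • y = 0, rfl⟩
    exact ⟨⟨y, rfl⟩, by simpa [pow_succ, mul_smul] using hy⟩

/-- The image of `M[p^k]` in `M/pM` is `M[p^k]/pM[p^(k+1)]`, and
`|M[p^k]| ≤ |M[p^(k+1)]| = |pM[p^(k+1)]| * |M[p]|`. -/
lemma card_map_mk_ker_pow_nsmul_le (p k : ℕ) [Finite (p ^ (k + 1) • AddMonoidHom.id M).ker] :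
    Nat.card ((p ^ k • AddMonoidHom.id M).ker.map
        (QuotientAddGroup.mk' (p • AddMonoidHom.id M).range)) ≤
      Nat.card (p • AddMonoidHom.id M).ker := by
  set σ := QuotientAddGroup.mk' (p • AddMonoidHom.id M).range
  set S := (p ^ (k + 1) • AddMonoidHom.id M).ker.map (p • AddMonoidHom.id M)
  have hker_le : (p • AddMonoidHom.id M).ker ≤ (p ^ (k + 1) • AddMonoidHom.id M).ker := by
    simpa using monotone_ker_pow_nsmul (M := M) p (by omega : 1 ≤ k + 1)
  have hk : Nat.card (p ^ k • AddMonoidHom.id M).ker =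
      Nat.card ((p ^ k • AddMonoidHom.id M).ker.map σ) * Nat.card S := by
    rw [card_eq_card_map_mul_card_ker_inf _ σ, QuotientAddGroup.ker_mk',
      range_nsmul_inf_ker_pow_nsmul]
  have hk1 : Nat.card (p ^ (k + 1) • AddMonoidHom.id M).ker =
      Nat.card S * Nat.card (p • AddMonoidHom.id M).ker := by
    rw [card_eq_card_map_mul_card_ker_inf _ (p • AddMonoidHom.id M), inf_eq_left.mpr hker_le]
  have hS : Nat.card S ≠ 0 := left_ne_zero_of_mul (hk1 ▸ Nat.card_pos.ne')
  have hle := card_le_of_le (monotone_ker_pow_nsmul (M := M) p k.le_succ)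
  rw [hk, hk1, mul_comm (Nat.card S)] at hle
  exact Nat.le_of_mul_le_mul_right hle (Nat.pos_of_ne_zero hS)

lemma exists_mem_ker_pow_nsmul_sub_mem_range {p : ℕ} (hp : p.Prime) {x : M}
    (hx : IsOfFinAddOrder x) :
    ∃ k, ∃ y ∈ (p ^ k • AddMonoidHom.id M).ker, x - y ∈ (p • AddMonoidHom.id M).range := by
  obtain ⟨e, r, hpr, hord⟩ :=
    Nat.exists_eq_pow_mul_and_not_dvd hx.addOrderOf_pos.ne' p hp.ne_one
  -- with `1 = u * p + v * r`, the element `(v * r) • x` is killed by `p ^ e` and `≡ x` mod `pM`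
  obtain ⟨u, v, huv⟩ := Nat.isCoprime_iff_coprime.mpr ((hp.coprime_iff_not_dvd).mpr hpr)
  refine ⟨e, (v * r) • x, ?_, u • x, ?_⟩
  · change p ^ e • (v * r) • x = 0
    rw [← natCast_zsmul, smul_smul, mul_left_comm, mul_smul, ← Nat.cast_mul,
      ← hord, natCast_zsmul, addOrderOf_nsmul_eq_zero, smul_zero]
  · change p • u • x = x - (v * r) • x
    rw [← natCast_zsmul, smul_smul, eq_sub_iff_add_eq, ← add_smul, mul_comm, huv, one_smul]

lemma finite_quotient_range_nsmul_of_isTorsion {p : ℕ} (hp : p.Prime)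
    (htor : IsAddTorsion M) (hfin : ∀ k, Finite (p ^ k • AddMonoidHom.id M).ker) :
    Finite (M ⧸ (p • AddMonoidHom.id M).range) := by
  set σ := QuotientAddGroup.mk' (p • AddMonoidHom.id M).range
  refine finite_of_monotone_cover_of_ncard_le
    (s := fun k => ((p ^ k • AddMonoidHom.id M).ker.map σ : Set _))
    (fun k l hkl => map_mono (f := σ) (monotone_ker_pow_nsmul p hkl)) (fun y => ?_)
    (fun k => (Set.toFinite _).image σ) (c := Nat.card (p • AddMonoidHom.id M).ker) fun k => ?_
  · obtain ⟨x, rfl⟩ := QuotientAddGroup.mk'_surjective _ y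
    obtain ⟨k, y, hy, hxy⟩ := exists_mem_ker_pow_nsmul_sub_mem_range hp (htor x)
    exact ⟨k, y, hy, (QuotientAddGroup.eq_iff_sub_mem.mpr hxy).symm⟩
  · have := hfin (k + 1)
    rw [← Nat.card_coe_set_eq]
    exact card_map_mk_ker_pow_nsmul_le p k

end Torsion

lemma PadicInt.finite_ker_pow_nsmul_quotient (p : ℕ) [Fact p.Prime] (k : ℕ) :
    Finite (p ^ k • AddMonoidHom.id (ℚ_[p] ⧸ (subring p).toAddSubgroup)).ker := by
  refine Set.Finite.to_subtype ((Set.finite_range fun m : Fin (p ^ k) =>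
    ((m / p ^ k : ℚ_[p]) : ℚ_[p] ⧸ (subring p).toAddSubgroup)).subset ?_)
  rintro y (hy : p ^ k • y = 0)
  obtain ⟨q, rfl⟩ := QuotientAddGroup.mk_surjective y
  have hq : (p : ℚ_[p]) ^ k * q ∈ subring p := by
    rw [← QuotientAddGroup.mk_nsmul, QuotientAddGroup.eq_zero_iff] at hy
    simpa [nsmul_eq_mul] using hy
  obtain ⟨z, hz⟩ : ∃ z : ℤ_[p], (z : ℚ_[p]) = p ^ k * q :=
    ⟨⟨_, (mem_subring_iff p).mp hq⟩, rfl⟩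
  obtain ⟨w, hw⟩ := Ideal.mem_span_singleton'.mp (z.appr_spec k)
  refine ⟨⟨z.appr k, z.appr_lt k⟩, QuotientAddGroup.eq_iff_sub_mem.mpr ?_⟩
  have hw' : (w : ℚ_[p]) * p ^ k = p ^ k * q - z.appr k := by
    simpa [hz] using congrArg ((↑) : ℤ_[p] → ℚ_[p]) hw
  have hpk : (p : ℚ_[p]) ^ k ≠ 0 :=
    pow_ne_zero _ (Nat.cast_ne_zero.mpr (Fact.out : p.Prime).ne_zero)
  have : (z.appr k : ℚ_[p]) / p ^ k - q = -w := by
    field_simp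
    linear_combination hw'
  rw [this]
  exact neg_mem w.2

lemma finite_ker_nsmul_of_injective {G H : Type*} [AddCommGroup G] [AddCommGroup H] {f : G →+ H}
    (hf : Function.Injective f) (m : ℕ) [Finite (m • AddMonoidHom.id H).ker] :
    Finite (m • AddMonoidHom.id G).ker :=
  Finite.of_injective
    (fun x => (⟨f x.1, (map_nsmul f m x.1).symm.trans ((congrArg f x.2).trans f.map_zero)⟩ :
      (m • AddMonoidHom.id H).ker))
    fun _ _ h => Subtype.ext (hf (congrArg Subtype.val h))

lemma finite_ker_nsmul_pi {ι Q : Type*} [Finite ι] [AddCommGroup Q] (m : ℕ)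
    [Finite (m • AddMonoidHom.id Q).ker] : Finite (m • AddMonoidHom.id (ι → Q)).ker :=
  Finite.of_injective
    (fun x i => (⟨x.1 i, congrFun x.2 i⟩ : (m • AddMonoidHom.id Q).ker))
    fun _ _ h => Subtype.ext (funext fun i => congrArg Subtype.val (congrFun h i))

lemma finite_ker_pow_nsmul_of_primaryComponent {M : Type*} [AddCommGroup M] (p k : ℕ)
    [Finite (p ^ k • AddMonoidHom.id (AddCommGroup.primaryComponent M p)).ker] :
    Finite (p ^ k • AddMonoidHom.id M).ker :=
  Finite.of_injective
    (fun x => (⟨⟨x, k, x.2⟩, Subtype.ext x.2⟩ :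
      (p ^ k • AddMonoidHom.id (AddCommGroup.primaryComponent M p)).ker))
    fun _ _ h => Subtype.ext (congrArg (fun y => (y.1 : M)) h)

section Quotient

variable {A : Type*} [AddCommGroup A]

lemma AddSubgroup.map_range_nsmul_of_surjective {H : Type*} [AddCommGroup H] {f : A →+ H}
    (hf : Function.Surjective f) (n : ℕ) :
    (n • AddMonoidHom.id A).range.map f = (n • AddMonoidHom.id H).range := by
  ext y
  constructor
  · rintro ⟨_, ⟨x, rfl⟩, rfl⟩
    exact ⟨f x, (map_nsmul f n x).symm⟩
  · rintro ⟨y, rfl⟩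
    obtain ⟨x, rfl⟩ := hf y
    exact ⟨n • x, ⟨x, rfl⟩, map_nsmul f n x⟩

lemma AddSubgroup.index_sup_range_nsmul (B : AddSubgroup A) (n : ℕ) :
    (B ⊔ (n • AddMonoidHom.id A).range).index = (n • AddMonoidHom.id (A ⧸ B)).range.index := by
  rw [← map_range_nsmul_of_surjective (QuotientAddGroup.mk'_surjective B), index_map,
    QuotientAddGroup.ker_mk', QuotientAddGroup.range_mk', index_top, mul_one, sup_comm]

lemma AddSubgroup.infinite_image_mk_of_index_sup_ne_zero {R B : AddSubgroup A}
    [Infinite (A ⧸ R)] (h : (B ⊔ R).index ≠ 0) : (QuotientAddGroup.mk' R '' B).Infinite := by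
  intro hfin
  have hindex : (B.map (QuotientAddGroup.mk' R)).index ≠ 0 := by
    rwa [index_map, QuotientAddGroup.ker_mk', QuotientAddGroup.range_mk', index_top, mul_one]
  have : Finite (B.map (QuotientAddGroup.mk' R)) := hfin.to_subtype
  have : Finite (A ⧸ R) := Nat.finite_of_card_ne_zero <| by
    rw [← card_mul_index (B.map (QuotientAddGroup.mk' R))]
    exact mul_ne_zero Nat.card_pos.ne' hindex
  exact not_finite (A ⧸ R)

end Quotient

/-- Let `p` be a prime and `A` an abelian group with `A/pA` infinite.  Let `B ≤ A` be a
subgroup such that `A/B` is torsion and the `p`-primary component of `A/B` embeds into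
`(ℚ_p/ℤ_p)^n` for some `n`.  Then the image of `B` in `A/pA` is infinite; in particular
`B` is not contained in `pA`. -/
theorem image_infinite_of_primary_finite_corank
    (p : ℕ) [Fact p.Prime] (A : Type*) [AddCommGroup A]
    (hA : Infinite (A ⧸ (p • AddMonoidHom.id A).range))
    (B : AddSubgroup A)
    (htor : AddMonoid.IsTorsion (A ⧸ B))
    (n : ℕ)
    (f : AddCommGroup.primaryComponent (A ⧸ B) p →+
        (Fin n → ℚ_[p] ⧸ (PadicInt.subring p).toAddSubgroup))
    (hf : Function.Injective f) :
    Set.Infinite ((QuotientAddGroup.mk' (p • AddMonoidHom.id A).range) '' B) ∧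
      ¬ B ≤ (p • AddMonoidHom.id A).range := by
  have htorsion_finite (k : ℕ) : Finite (p ^ k • AddMonoidHom.id (A ⧸ B)).ker :=
    have := PadicInt.finite_ker_pow_nsmul_quotient p k
    have := finite_ker_nsmul_pi (ι := Fin n)
      (Q := ℚ_[p] ⧸ (PadicInt.subring p).toAddSubgroup) (p ^ k)
    have := finite_ker_nsmul_of_injective hf (p ^ k)
    finite_ker_pow_nsmul_of_primaryComponent p k
  have := finite_quotient_range_nsmul_of_isTorsion Fact.out htor htorsion_finite
  have hindex : (B ⊔ (p • AddMonoidHom.id A).range).index ≠ 0 := by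
    rw [AddSubgroup.index_sup_range_nsmul]
    exact AddSubgroup.index_ne_zero_of_finite
  have himage := AddSubgroup.infinite_image_mk_of_index_sup_ne_zero hindex
  refine ⟨himage, fun hle => himage ((Set.finite_singleton 0).subset ?_)⟩
  rintro _ ⟨b, hb, rfl⟩
  exact (QuotientAddGroup.eq_zero_iff b).mpr (hle hb)
end

section
/- (Fundamental theorem of projective geometry) Let k₁, k₂ be fields and V_i a k_i-vector space with dim_{k_i} V_i ≥ 3 (i = 1,2). Let σ : ℙ(V₁) → ℙ(V₂) be a bijection mapping lines onto lines (a collineation). Then there exist a field isomorphism μ : k₁ → k₂ and a μ-semilinear additive bijection λ : V₁ → V₂ inducing σ; moreover, μ is uniquely determined and λ is unique up to replacing λ(−) by λ(a·−) for a (unique) scalar a ∈ k₁^×. -/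
/-!
Choose a vector `s x` on the line `σ [x]` for every `x ≠ 0`; then `z ∈ span {x, y}` holds exactly
when `s z ∈ span {s x, s y}`. Fix `a ≠ 0`. For `x ∉ K₁ ∙ a`, rescale `s x` to the unique vector
`g x` on its line such that `s a + g x` lies on the line of `s (a + x)`. When `a, x, y` are
independent, `s (a + x + y)` lies on the planes spanned by `s a + g x, g y` and by
`s a + g y, g x`, which forces `g (x + y) = g x + g y`. A vector `b ∉ K₁ ∙ a` extends `g`
additively to `K₁ ∙ a`, and a third independent direction gives additivity everywhere.

An additive map sending each line into the corresponding line and independent pairs to independent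
pairs is a scalar multiple of any other such map: comparing `x`, `y` and `x + y` shows that the
factor does not depend on the vector. Applied to `x ↦ g (c • x)` and `g` this produces the field
homomorphism `μ`; applied to `g ∘ g'`, where `g'` is built from `σ⁻¹`, it makes `μ` and `g`
bijective; applied to two lifts of `σ` it gives uniqueness up to a scalar.
-/

open scoped LinearAlgebra.Projectivization

/-- A line in the projective space `ℙ K V`: the set of points lying in a two-dimensional
subspace of `V`. -/
def IsLine (K V : Type*) [Field K] [AddCommGroup V] [Module K V]
    (s : Set (ℙ K V)) : Prop :=
  ∃ W : Submodule K V, Module.finrank K W = 2 ∧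
    s = {x : ℙ K V | x.submodule ≤ W}

open Submodule

section LinearAlgebra

variable {K V : Type*} [Field K] [AddCommGroup V] [Module K V]

theorem exists_notMem_span_of_mk_lt_rank {s : Set V} (hs : Cardinal.mk s < Module.rank K V) :
    ∃ z : V, z ∉ span K s := by
  by_contra! h
  have htop : span K s = ⊤ := eq_top_iff'.2 h
  have := rank_span_le (R := K) s
  rw [htop, rank_top] at this
  exact this.not_gt hs

theorem exists_notMem_span_pair (h3 : 3 ≤ Module.rank K V) (x y : V) :
    ∃ z : V, z ∉ span K {x, y} := by
  refine exists_notMem_span_of_mk_lt_rank (lt_of_lt_of_le ?_ h3)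
  refine (Cardinal.mk_insert_le.trans_lt ?_)
  rw [Cardinal.mk_singleton]
  norm_num

theorem exists_ne_zero_notMem_span_singleton (h2 : 1 < Module.rank K V) :
    ∃ x z : V, x ≠ 0 ∧ z ∉ K ∙ x := by
  obtain ⟨x, hx⟩ := exists_notMem_span_of_mk_lt_rank (K := K) (s := ∅)
    (by simpa using zero_lt_one.trans h2)
  obtain ⟨z, hz⟩ := exists_notMem_span_of_mk_lt_rank (K := K) (s := {x}) (by simpa using h2)
  exact ⟨x, z, by simpa using hx, hz⟩

theorem mem_span_singleton_comm {x y : V} (hy : y ≠ 0) (h : y ∈ K ∙ x) : x ∈ K ∙ y := by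
  simpa using mem_span_insert_exchange (s := ∅) (by simpa using h) (by simpa using hy)

theorem span_singleton_eq_of_mem {x y : V} (hy : y ≠ 0) (h : y ∈ K ∙ x) : K ∙ y = K ∙ x :=
  le_antisymm ((span_singleton_le_iff_mem _ _).2 h)
    ((span_singleton_le_iff_mem _ _).2 (mem_span_singleton_comm hy h))

theorem add_ne_zero_of_notMem_span_singleton {a x : V} (hx : x ∉ K ∙ a) : a + x ≠ 0 := by
  intro h
  rw [← neg_eq_of_add_eq_zero_right h] at hx
  exact hx (neg_mem (mem_span_singleton_self a))

theorem add_mem_span_pair {x y : V} : x + y ∈ span K {x, y} :=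
  add_mem (subset_span (Set.mem_insert _ _)) (subset_span (Set.mem_insert_of_mem _ rfl))

theorem span_singleton_le_span_pair (a b : V) : K ∙ a ≤ span K {a, b} :=
  span_mono (Set.singleton_subset_iff.2 (Set.mem_insert _ _))

theorem span_pair_le_of_mem {a u w : V} (hw : w ∈ span K {a, u}) :
    span K {a, w} ≤ span K {a, u} :=
  span_le.2 <| Set.insert_subset_iff.2 ⟨subset_span (Set.mem_insert _ _),
    Set.singleton_subset_iff.2 hw⟩

theorem span_pair_le_span_pair {x y x' y' : V} (hx : x ∈ K ∙ x') (hy : y ∈ K ∙ y') :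
    span K {x, y} ≤ span K {x', y'} :=
  span_le.2 <| Set.insert_subset_iff.2
    ⟨span_mono (Set.singleton_subset_iff.2 (Set.mem_insert _ _)) hx,
      Set.singleton_subset_iff.2 (span_mono (Set.subset_insert _ _) hy)⟩

theorem add_notMem_span_singleton_of_notMem_span_pair {a x y : V} (hy : y ∉ span K {a, x}) :
    x + y ∉ K ∙ a := fun h => hy <| by
  simpa using sub_mem (span_singleton_le_span_pair a x h)
    (subset_span (Set.mem_insert_of_mem _ rfl) : x ∈ span K {a, x})

theorem linearIndependent_pair_iff_notMem {x y : V} :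
    LinearIndependent K ![x, y] ↔ x ≠ 0 ∧ y ∉ K ∙ x := by
  by_cases hx : x = 0
  · simpa [hx] using fun h : LinearIndependent K ![0, y] => h.ne_zero 0 rfl
  · simp [LinearIndependent.pair_iff' hx, mem_span_singleton, hx]

theorem linearIndependent_pair_iff_of_span_singleton_eq {x y x' y' : V} (hx : K ∙ x = K ∙ x')
    (hy : K ∙ y = K ∙ y') : LinearIndependent K ![x, y] ↔ LinearIndependent K ![x', y'] := by
  rw [linearIndependent_pair_iff_notMem, linearIndependent_pair_iff_notMem, ne_eq, ne_eq,
    ← span_singleton_eq_bot (R := K), ← span_singleton_eq_bot (R := K) (x := x'),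
    ← span_singleton_le_iff_mem, ← span_singleton_le_iff_mem, hx, hy]

theorem finrank_span_pair {x y : V}
    (h : LinearIndependent K ![x, y]) : Module.finrank K (span K {x, y}) = 2 := by
  rw [← Matrix.range_cons_cons_empty x y ![], finrank_span_eq_card h, Fintype.card_fin]

theorem linearIndependent_triple_iff {x y z : V} :
    LinearIndependent K ![x, y, z] ↔
      ∀ a b c : K, a • x + b • y + c • z = 0 → a = 0 ∧ b = 0 ∧ c = 0 := by
  rw [Fintype.linearIndependent_iff]
  refine ⟨fun h a b c habc => ?_, fun h g hg i => ?_⟩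
  · have := h ![a, b, c] (by simpa [Fin.sum_univ_three] using habc)
    exact ⟨this 0, this 1, this 2⟩
  · rw [Fin.sum_univ_three] at hg
    obtain ⟨h0, h1, h2⟩ := h _ _ _ hg
    fin_cases i <;> assumption

theorem linearIndependent_triple_iff_notMem {x y z : V} :
    LinearIndependent K ![x, y, z] ↔ LinearIndependent K ![x, y] ∧ z ∉ span K {x, y} := by
  have : (![x, y, z] : Fin 3 → V) = Fin.snoc ![x, y] z := by
    ext i; fin_cases i <;> rfl
  rw [this, linearIndependent_finSnoc, Matrix.range_cons_cons_empty]

theorem linearIndependent_triple_of_mem_span_singleton {x y z y' z' : V}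
    (h : LinearIndependent K ![x, y, z]) (hy : y' ∈ K ∙ y) (hy' : y' ≠ 0) (hz : z' ∈ K ∙ z)
    (hz' : z' ≠ 0) : LinearIndependent K ![x, y', z'] := by
  obtain ⟨p, rfl⟩ := mem_span_singleton.1 hy
  obtain ⟨q, rfl⟩ := mem_span_singleton.1 hz
  refine linearIndependent_triple_iff.2 fun a b c habc => ?_
  obtain ⟨ha, hb, hc⟩ := linearIndependent_triple_iff.1 h a (b * p) (c * q)
    (by rw [← habc]; module)
  exact ⟨ha, (mul_eq_zero.1 hb).resolve_right (left_ne_zero_of_smul hy'),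
    (mul_eq_zero.1 hc).resolve_right (left_ne_zero_of_smul hz')⟩

variable {e₁ e₂ e₃ w w' ω ω' : V}

theorem exists_mem_span_singleton_add (hw : w ∈ span K {e₁, e₂}) (hw₂ : w ∉ K ∙ e₂) :
    ∃ ω ∈ K ∙ e₂, w ∈ K ∙ (e₁ + ω) := by
  obtain ⟨c₁, c₂, rfl⟩ := mem_span_pair.1 hw
  have hc₁ : c₁ ≠ 0 := by
    rintro rfl
    exact hw₂ (mem_span_singleton.2 ⟨c₂, by simp⟩)
  refine ⟨(c₁⁻¹ * c₂) • e₂, mem_span_singleton.2 ⟨_, rfl⟩, mem_span_singleton.2 ⟨c₁, ?_⟩⟩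
  match_scalars <;> field_simp

theorem eq_of_mem_span_singleton_add (he : LinearIndependent K ![e₁, e₂]) (hω : ω ∈ K ∙ e₂)
    (hω' : ω' ∈ K ∙ e₂) (hw : w ≠ 0) (h : w ∈ K ∙ (e₁ + ω)) (h' : w ∈ K ∙ (e₁ + ω')) :
    ω = ω' := by
  obtain ⟨p, rfl⟩ := mem_span_singleton.1 hω
  obtain ⟨p', rfl⟩ := mem_span_singleton.1 hω'
  obtain ⟨t, rfl⟩ := mem_span_singleton.1 h
  obtain ⟨t', ht'⟩ := mem_span_singleton.1 h'
  obtain ⟨h₁, h₂⟩ := LinearIndependent.pair_iff.1 he (t' - t) (t' * p' - t * p)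
    (by linear_combination (norm := module) ht')
  have ht : t ≠ 0 := by rintro rfl; simp at hw
  have : t * p' = t * p := by linear_combination h₂ - p' * h₁
  rw [mul_left_cancel₀ ht this]

theorem mem_span_singleton_add_add_of_mem_span_pair (he : LinearIndependent K ![e₁, e₂, e₃])
    (h₂ : w ∈ span K {e₁ + e₂, e₃}) (h₃ : w ∈ span K {e₁ + e₃, e₂}) :
    w ∈ K ∙ (e₁ + e₂ + e₃) := by
  obtain ⟨α, β, hαβ⟩ := mem_span_pair.1 h₂
  obtain ⟨γ, δ, hγδ⟩ := mem_span_pair.1 h₃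
  obtain ⟨h₁, h₂, h₃⟩ := linearIndependent_triple_iff.1 he (α - γ) (α - δ) (β - γ)
    (by linear_combination (norm := module) hαβ - hγδ)
  refine mem_span_singleton.2 ⟨α, ?_⟩
  linear_combination (norm := module) hαβ + (h₁ - h₃) • e₃

theorem add_mem_span_singleton_of_mem_span_pair (he : LinearIndependent K ![e₁, e₂, e₃])
    (hw₀ : w ≠ 0) (hw : w ∈ K ∙ (e₁ + e₂ + e₃)) (h₁ : w ∈ span K {e₁, w'})
    (h₂₃ : w' ∈ span K {e₂, e₃}) : e₂ + e₃ ∈ K ∙ w' := by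
  obtain ⟨t, rfl⟩ := mem_span_singleton.1 hw
  obtain ⟨γ, δ, hγδ⟩ := mem_span_pair.1 h₁
  obtain ⟨α, β, rfl⟩ := mem_span_pair.1 h₂₃
  obtain ⟨-, h₂, h₃⟩ := linearIndependent_triple_iff.1 he (t - γ) (t - δ * α) (t - δ * β)
    (by linear_combination (norm := module) -hγδ)
  have ht : t ≠ 0 := by rintro rfl; simp at hw₀
  have hδα : δ * α ≠ 0 := by rw [← sub_eq_zero.1 h₂]; exact ht
  have hαβ : α = β := mul_left_cancel₀ (left_ne_zero_of_mul hδα) (by linear_combination h₃ - h₂)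
  refine mem_span_singleton.2 ⟨α⁻¹, ?_⟩
  subst hαβ
  match_scalars <;> field_simp [right_ne_zero_of_mul hδα]

theorem mem_span_singleton_of_mem_span_pair_of_mem_span_pair
    (he : LinearIndependent K ![e₁, e₂, e₃]) (h₂ : w ∈ span K {e₁, e₂})
    (h₃ : w ∈ span K {e₁, e₃}) : w ∈ K ∙ e₁ := by
  obtain ⟨α, β, rfl⟩ := mem_span_pair.1 h₂
  obtain ⟨γ, δ, hγδ⟩ := mem_span_pair.1 h₃
  obtain ⟨-, rfl, -⟩ := linearIndependent_triple_iff.1 he (α - γ) β (-δ)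
    (by linear_combination (norm := module) -hγδ)
  exact mem_span_singleton.2 ⟨α, by simp⟩

end LinearAlgebra

namespace Projectivization

variable {K V : Type*} [Field K] [AddCommGroup V] [Module K V]

theorem mem_span_singleton_of_mk_eq_mk {u v : V} {hu : u ≠ 0} {hv : v ≠ 0}
    (h : mk K u hu = mk K v hv) : u ∈ K ∙ v :=
  mem_span_singleton.2 ((mk_eq_mk_iff' K u v hu hv).1 h)

end Projectivization

section SemilinearMaps

variable {K₁ K₂ V₁ V₂ : Type*} [Field K₁] [Field K₂] [AddCommGroup V₁] [Module K₁ V₁]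
  [AddCommGroup V₂] [Module K₂ V₂]

/-- Comparing `h (x + y)` with `h x + h y` forces a common coefficient on independent vectors;
a third vector independent of both links dependent ones. -/
theorem exists_smul_eq_of_mem_span_singleton (h2 : 1 < Module.rank K₁ V₁) (f h : V₁ →+ V₂)
    (hf : ∀ x y : V₁, LinearIndependent K₁ ![x, y] → LinearIndependent K₂ ![f x, f y])
    (hh : ∀ x, h x ∈ K₂ ∙ f x) : ∃ d : K₂, ∀ x, h x = d • f x := by
  have coeff : ∀ x, ∃ c : K₂, h x = c • f x := fun x =>
    (mem_span_singleton.1 (hh x)).imp fun _ hc => hc.symm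
  have same : ∀ x y : V₁, LinearIndependent K₁ ![x, y] → ∀ c c' : K₂,
      h x = c • f x → h y = c' • f y → c = c' := by
    intro x y hxy c c' hx hy
    obtain ⟨c'', hc''⟩ := coeff (x + y)
    rw [map_add, map_add] at hc''
    obtain ⟨h₁, h₂⟩ := LinearIndependent.pair_iff.1 (hf x y hxy) (c - c'') (c' - c'')
      (by linear_combination (norm := module) hc'' - hx - hy)
    rw [sub_eq_zero.1 h₁, sub_eq_zero.1 h₂]
  obtain ⟨x₀, z, hx₀, hz⟩ := exists_ne_zero_notMem_span_singleton h2
  have hz₀ : z ≠ 0 := fun h => hz (h ▸ zero_mem _)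
  obtain ⟨d, hd⟩ := coeff z
  refine ⟨d, fun x => ?_⟩
  obtain ⟨c, hc⟩ := coeff x
  by_cases hx : x = 0
  · simp [hx]
  rw [hc]
  congr 1
  by_cases hxz : x ∈ K₁ ∙ z
  · obtain ⟨c₀, hc₀⟩ := coeff x₀
    have hx₀z : x₀ ∉ K₁ ∙ z := fun h => hz (mem_span_singleton_comm hx₀ h)
    have hx₀x : x₀ ∉ K₁ ∙ x := fun h => hx₀z (mem_span_singleton_trans h hxz)
    exact (same x x₀ (linearIndependent_pair_iff_notMem.2 ⟨hx, hx₀x⟩) c c₀ hc hc₀).trans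
      (same z x₀ (linearIndependent_pair_iff_notMem.2 ⟨hz₀, hx₀z⟩) d c₀ hd hc₀).symm
  · exact (same z x (linearIndependent_pair_iff_notMem.2 ⟨hz₀, hxz⟩) d c hd hc).symm

theorem exists_ringHom_map_smul (h2 : 1 < Module.rank K₁ V₁) (g : V₁ →+ V₂)
    (hg : ∀ x y : V₁, LinearIndependent K₁ ![x, y] → LinearIndependent K₂ ![g x, g y])
    (hline : ∀ (c : K₁) (x : V₁), g (c • x) ∈ K₂ ∙ g x) :
    ∃ μ : K₁ →+* K₂, ∀ (c : K₁) (x : V₁), g (c • x) = μ c • g x := by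
  choose μ hμ using fun c : K₁ => exists_smul_eq_of_mem_span_singleton h2 g
    (g.comp (DistribSMul.toAddMonoidHom V₁ c)) hg (hline c)
  replace hμ : ∀ (c : K₁) (x : V₁), g (c • x) = μ c • g x := hμ
  obtain ⟨x₀, z, hx₀, hz⟩ := exists_ne_zero_notMem_span_singleton h2
  have hgx₀ : g x₀ ≠ 0 := by
    simpa using (hg x₀ z (linearIndependent_pair_iff_notMem.2 ⟨hx₀, hz⟩)).ne_zero 0
  have inj := smul_left_injective K₂ hgx₀
  refine ⟨{ toFun := μ
            map_one' := inj ?_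
            map_mul' c d := inj ?_
            map_zero' := inj ?_
            map_add' c d := inj ?_ }, hμ⟩
  · simpa using (hμ 1 x₀).symm
  · dsimp only
    rw [← hμ, mul_smul, hμ, hμ, smul_smul]
  · dsimp only
    rw [← hμ, zero_smul, zero_smul, map_zero]
  · dsimp only
    rw [← hμ, add_smul, map_add, hμ, hμ, add_smul]

theorem linearIndependent_pair_map {μ : K₁ ≃+* K₂} (e : V₁ ≃+ V₂)
    (hsemi : ∀ (a : K₁) (x : V₁), e (a • x) = μ a • e x)
    {x y : V₁} (hxy : LinearIndependent K₁ ![x, y]) : LinearIndependent K₂ ![e x, e y] := by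
  refine LinearIndependent.pair_iff.2 fun α β hαβ => ?_
  obtain ⟨α, rfl⟩ := μ.surjective α
  obtain ⟨β, rfl⟩ := μ.surjective β
  rw [← hsemi, ← hsemi, ← map_add, ← map_zero e] at hαβ
  obtain ⟨rfl, rfl⟩ := LinearIndependent.pair_iff.1 hxy α β (e.injective hαβ)
  simp

theorem eq_and_existsUnique_smul_of_mem_span_singleton (h2 : 1 < Module.rank K₁ V₁)
    {μ μ' : K₁ ≃+* K₂} {e e' : V₁ ≃+ V₂} (he : ∀ (a : K₁) (x : V₁), e (a • x) = μ a • e x)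
    (he' : ∀ (a : K₁) (x : V₁), e' (a • x) = μ' a • e' x) (h : ∀ x, e' x ∈ K₂ ∙ e x) :
    μ' = μ ∧ ∃! a : K₁ˣ, ∀ x : V₁, e' x = e ((a : K₁) • x) := by
  obtain ⟨c, hc⟩ := exists_smul_eq_of_mem_span_singleton h2 e.toAddMonoidHom e'.toAddMonoidHom
    (fun _ _ => linearIndependent_pair_map e he) h
  replace hc : ∀ x, e' x = c • e x := hc
  obtain ⟨x₀, -, hx₀, -⟩ := exists_ne_zero_notMem_span_singleton h2
  have hc₀ : c ≠ 0 := by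
    rintro rfl
    exact hx₀ (e'.injective (by rw [hc, zero_smul, map_zero]))
  have hex₀ : c • e x₀ ≠ 0 := smul_ne_zero hc₀ (by simpa using hx₀)
  refine ⟨RingEquiv.ext fun t => smul_left_injective K₂ hex₀ ?_,
    ⟨Units.mk0 (μ.symm c) (by simpa using hc₀), fun x => ?_, fun a ha => ?_⟩⟩
  · calc μ' t • c • e x₀ = e' (t • x₀) := by rw [he', hc]
      _ = μ t • c • e x₀ := by rw [hc, he, smul_comm]
  · rw [hc, Units.val_mk0, he, RingEquiv.apply_symm_apply]
  · refine Units.ext (smul_left_injective K₁ hx₀ (e.injective ?_))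
    simp only [Units.val_mk0]
    rw [← ha, hc, he, RingEquiv.apply_symm_apply]

theorem bijective_of_map_comp_map_eq_id (h2 : 1 < Module.rank K₂ V₂) {μ : K₁ →+* K₂}
    {μ' : K₂ →+* K₁} (g : V₁ →ₛₗ[μ] V₂) (g' : V₂ →ₛₗ[μ'] V₁) (hg : Function.Injective g)
    (hg' : Function.Injective g')
    (h : ∀ p, Projectivization.map g hg (Projectivization.map g' hg' p) = p) :
    Function.Bijective μ ∧ Function.Bijective g := by
  have hmem : ∀ y, g (g' y) ∈ K₂ ∙ y := fun y => by
    rcases eq_or_ne y 0 with rfl | hy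
    · simp
    · exact Projectivization.mem_span_singleton_of_mk_eq_mk (h (Projectivization.mk K₂ y hy))
  obtain ⟨d, hd⟩ := exists_smul_eq_of_mem_span_singleton h2 (AddMonoidHom.id V₂)
    (g.toAddMonoidHom.comp g'.toAddMonoidHom) (fun _ _ h => h) hmem
  replace hd : ∀ y, g (g' y) = d • y := hd
  obtain ⟨y₀, -, hy₀, -⟩ := exists_ne_zero_notMem_span_singleton h2
  have hdy₀ : d • y₀ ≠ 0 := by
    rw [← hd]
    exact (map_ne_zero_iff g hg).2 ((map_ne_zero_iff g' hg').2 hy₀)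
  have hμ : ∀ c, μ (μ' c) = c := fun c => smul_left_injective K₂ hdy₀ <|
    calc μ (μ' c) • d • y₀ = g (g' (c • y₀)) := by rw [← hd, ← g.map_smulₛₗ, ← g'.map_smulₛₗ]
      _ = c • d • y₀ := by rw [hd, smul_comm]
  refine ⟨⟨μ.injective, fun c => ⟨μ' c, hμ c⟩⟩, hg, fun y => ⟨μ' d⁻¹ • g' y, ?_⟩⟩
  rw [g.map_smulₛₗ, hμ, hd, smul_smul, inv_mul_cancel₀ (left_ne_zero_of_smul hdy₀), one_smul]

end SemilinearMaps

section Collinearity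

variable {K₁ K₂ V₁ V₂ : Type*} [Field K₁] [Field K₂] [AddCommGroup V₁] [Module K₁ V₁]
  [AddCommGroup V₂] [Module K₂ V₂]

variable (K₁ K₂) in
structure IsCollinearityPreserving (s : V₁ → V₂) : Prop where
  map_zero : s 0 = 0
  mem_span_pair_iff {x y z : V₁} : z ∈ span K₁ {x, y} ↔ s z ∈ span K₂ {s x, s y}

namespace IsCollinearityPreserving

variable {s : V₁ → V₂}

theorem mem_span_singleton_iff (hs : IsCollinearityPreserving K₁ K₂ s) {x y : V₁} :
    y ∈ K₁ ∙ x ↔ s y ∈ K₂ ∙ s x := by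
  simpa using hs.mem_span_pair_iff (x := x) (y := x) (z := y)

theorem ne_zero (hs : IsCollinearityPreserving K₁ K₂ s) {x : V₁} (hx : x ≠ 0) : s x ≠ 0 := by
  simpa [hs.map_zero, hx] using (hs.mem_span_singleton_iff (x := 0) (y := x)).not

theorem linearIndependent_pair (hs : IsCollinearityPreserving K₁ K₂ s) {x y : V₁}
    (h : LinearIndependent K₁ ![x, y]) : LinearIndependent K₂ ![s x, s y] := by
  rw [linearIndependent_pair_iff_notMem] at h ⊢
  exact ⟨hs.ne_zero h.1, hs.mem_span_singleton_iff.not.1 h.2⟩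

theorem linearIndependent_triple (hs : IsCollinearityPreserving K₁ K₂ s) {x y z : V₁}
    (h : LinearIndependent K₁ ![x, y, z]) : LinearIndependent K₂ ![s x, s y, s z] := by
  rw [linearIndependent_triple_iff_notMem] at h ⊢
  exact ⟨hs.linearIndependent_pair h.1, hs.mem_span_pair_iff.not.1 h.2⟩

end IsCollinearityPreserving

open Classical in
/-- For `x ∉ K₁ ∙ a`, the vector on the line `K₂ ∙ s x` normalized so that `s a + rescale K₂ s a x`
lies on the line of `s (a + x)`; the junk value `0` is never used. -/
noncomputable def rescale (K₂ : Type*) [Field K₂] [Module K₂ V₂] (s : V₁ → V₂) (a x : V₁) :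
    V₂ :=
  if h : ∃ ω ∈ K₂ ∙ s x, s (a + x) ∈ K₂ ∙ (s a + ω) then h.choose else 0

namespace IsCollinearityPreserving

variable {s : V₁ → V₂} {a x y : V₁}

theorem rescale_spec (hs : IsCollinearityPreserving K₁ K₂ s) (ha : a ≠ 0) (hx : x ∉ K₁ ∙ a) :
    rescale K₂ s a x ∈ K₂ ∙ s x ∧ s (a + x) ∈ K₂ ∙ (s a + rescale K₂ s a x) := by
  have hax : a + x ∉ K₁ ∙ x := fun h => hx <|
    mem_span_singleton_comm ha ((Submodule.add_mem_iff_left _ (mem_span_singleton_self x)).1 h)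
  have h : ∃ ω ∈ K₂ ∙ s x, s (a + x) ∈ K₂ ∙ (s a + ω) :=
    exists_mem_span_singleton_add (hs.mem_span_pair_iff.1 (add_mem_span_pair (K := K₁)))
      (hs.mem_span_singleton_iff.not.1 hax)
  rw [rescale, dif_pos h]
  exact h.choose_spec

theorem rescale_ne_zero (hs : IsCollinearityPreserving K₁ K₂ s) (ha : a ≠ 0) (hx : x ∉ K₁ ∙ a) :
    rescale K₂ s a x ≠ 0 := by
  intro h
  have := (hs.rescale_spec ha hx).2
  rw [h, add_zero, ← hs.mem_span_singleton_iff] at this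
  exact hx ((Submodule.add_mem_iff_right _ (mem_span_singleton_self a)).1 this)

theorem eq_rescale (hs : IsCollinearityPreserving K₁ K₂ s) (ha : a ≠ 0) (hx : x ∉ K₁ ∙ a)
    {ω : V₂} (hω : ω ∈ K₂ ∙ s x) (h : s (a + x) ∈ K₂ ∙ (s a + ω)) : ω = rescale K₂ s a x :=
  eq_of_mem_span_singleton_add
    (hs.linearIndependent_pair (linearIndependent_pair_iff_notMem.2 ⟨ha, hx⟩)) hω
    (hs.rescale_spec ha hx).1 (hs.ne_zero (add_ne_zero_of_notMem_span_singleton hx)) h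
    (hs.rescale_spec ha hx).2

/-- `s (a + x + y)` lies on the planes through `s a + u, v` and through `s a + v, u`, so it spans
`s a + u + v`; projecting from `s a` then puts `u + v` on the line `K₂ ∙ s (x + y)`. -/
theorem rescale_add (hs : IsCollinearityPreserving K₁ K₂ s) (ha : a ≠ 0) (hx : x ∉ K₁ ∙ a)
    (hy : y ∉ span K₁ {a, x}) :
    rescale K₂ s a (x + y) = rescale K₂ s a x + rescale K₂ s a y := by
  have hya : y ∉ K₁ ∙ a := fun h => hy (span_singleton_le_span_pair a x h)
  have hxy : x + y ∉ K₁ ∙ a := add_notMem_span_singleton_of_notMem_span_pair hy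
  set u := rescale K₂ s a x
  set v := rescale K₂ s a y
  obtain ⟨hu, hau⟩ := hs.rescale_spec ha hx
  obtain ⟨hv, hav⟩ := hs.rescale_spec ha hya
  have hI : LinearIndependent K₂ ![s a, u, v] :=
    linearIndependent_triple_of_mem_span_singleton (hs.linearIndependent_triple
      (linearIndependent_triple_iff_notMem.2 ⟨linearIndependent_pair_iff_notMem.2 ⟨ha, hx⟩, hy⟩))
      hu (hs.rescale_ne_zero ha hx) hv (hs.rescale_ne_zero ha hya)
  have hsu : s x ∈ K₂ ∙ u := mem_span_singleton_comm (hs.rescale_ne_zero ha hx) hu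
  have hsv : s y ∈ K₂ ∙ v := mem_span_singleton_comm (hs.rescale_ne_zero ha hya) hv
  have hw : s (a + (x + y)) ≠ 0 := hs.ne_zero (add_ne_zero_of_notMem_span_singleton hxy)
  have h₁ : s (a + (x + y)) ∈ span K₂ {s a + u, v} :=
    span_pair_le_span_pair hau hsv (hs.mem_span_pair_iff.1 (mem_span_pair.2 ⟨1, 1, by module⟩))
  have h₂ : s (a + (x + y)) ∈ span K₂ {s a + v, u} :=
    span_pair_le_span_pair hav hsu (hs.mem_span_pair_iff.1 (mem_span_pair.2 ⟨1, 1, by module⟩))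
  have h₃ : s (x + y) ∈ span K₂ {u, v} :=
    span_pair_le_span_pair hsu hsv (hs.mem_span_pair_iff.1 (add_mem_span_pair (K := K₁)))
  have hsum := mem_span_singleton_add_add_of_mem_span_pair hI h₁ h₂
  have huv := add_mem_span_singleton_of_mem_span_pair hI hw hsum
    (hs.mem_span_pair_iff.1 (add_mem_span_pair (K := K₁))) h₃
  exact (hs.eq_rescale ha hxy huv (by simpa only [add_assoc] using hsum)).symm

end IsCollinearityPreserving

end Collinearity

section Lift

variable {K₁ K₂ V₁ V₂ : Type*} [Field K₁] [Field K₂] [AddCommGroup V₁] [Module K₁ V₁]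
  [AddCommGroup V₂] [Module K₂ V₂]

open Classical in
/-- Extends `rescale` to the line `K₁ ∙ a` by additivity through the auxiliary vector `b`. -/
noncomputable def semilinearLift (K₁ K₂ : Type*) [Field K₁] [Module K₁ V₁] [Field K₂]
    [Module K₂ V₂] (s : V₁ → V₂) (a b x : V₁) : V₂ :=
  if x ∈ K₁ ∙ a then rescale K₂ s a (x + b) - rescale K₂ s a b else rescale K₂ s a x

variable {s : V₁ → V₂} {a b x : V₁}

theorem semilinearLift_of_notMem (hx : x ∉ K₁ ∙ a) :
    semilinearLift K₁ K₂ s a b x = rescale K₂ s a x :=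
  if_neg hx

theorem semilinearLift_zero : semilinearLift K₁ K₂ s a b 0 = 0 := by
  simp [semilinearLift]

namespace IsCollinearityPreserving

theorem rescale_add_sub_rescale_eq_of_notMem_span_pair (hs : IsCollinearityPreserving K₁ K₂ s)
    (ha : a ≠ 0) (hx : x ∈ K₁ ∙ a) {b₁ b₂ : V₁} (hb₁ : b₁ ∉ K₁ ∙ a)
    (hb₂ : b₂ ∉ span K₁ {a, b₁}) :
    rescale K₂ s a (x + b₁) - rescale K₂ s a b₁ = rescale K₂ s a (x + b₂) - rescale K₂ s a b₂ := by
  have hb₂a : b₂ ∉ K₁ ∙ a := fun h => hb₂ (span_singleton_le_span_pair a b₁ h)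
  have hb₁₂ : b₁ ∉ span K₁ {a, b₂} := fun h => hb₂ <| by
    rw [Set.pair_comm] at h ⊢
    exact mem_span_insert_exchange h hb₁
  have hle : ∀ {b}, span K₁ {a, x + b} ≤ span K₁ {a, b} := fun {b} =>
    span_pair_le_of_mem (add_mem (span_singleton_le_span_pair a b hx)
      (subset_span (Set.mem_insert_of_mem _ rfl)))
  have e₁ := hs.rescale_add ha (by rwa [Submodule.add_mem_iff_right _ hx]) fun h => hb₂ (hle h)
  have e₂ := hs.rescale_add ha (by rwa [Submodule.add_mem_iff_right _ hx]) fun h => hb₁₂ (hle h)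
  rw [sub_eq_sub_iff_add_eq_add, ← e₁, ← e₂, add_right_comm]

theorem rescale_add_sub_rescale_eq (hs : IsCollinearityPreserving K₁ K₂ s)
    (h3 : 3 ≤ Module.rank K₁ V₁) (ha : a ≠ 0) (hx : x ∈ K₁ ∙ a) {b₁ b₂ : V₁}
    (hb₁ : b₁ ∉ K₁ ∙ a) (hb₂ : b₂ ∉ K₁ ∙ a) :
    rescale K₂ s a (x + b₁) - rescale K₂ s a b₁ = rescale K₂ s a (x + b₂) - rescale K₂ s a b₂ := by
  by_cases h : b₂ ∈ span K₁ {a, b₁}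
  · obtain ⟨b₃, hb₃⟩ := exists_notMem_span_pair h3 a b₁
    exact (hs.rescale_add_sub_rescale_eq_of_notMem_span_pair ha hx hb₁ hb₃).trans
      (hs.rescale_add_sub_rescale_eq_of_notMem_span_pair ha hx hb₂
        fun h' => hb₃ (span_pair_le_of_mem h h')).symm
  · exact hs.rescale_add_sub_rescale_eq_of_notMem_span_pair ha hx hb₁ h

theorem semilinearLift_of_mem (hs : IsCollinearityPreserving K₁ K₂ s)
    (h3 : 3 ≤ Module.rank K₁ V₁) (ha : a ≠ 0) (hb : b ∉ K₁ ∙ a) (hx : x ∈ K₁ ∙ a) {b' : V₁}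
    (hb' : b' ∉ K₁ ∙ a) :
    semilinearLift K₁ K₂ s a b x = rescale K₂ s a (x + b') - rescale K₂ s a b' := by
  rw [semilinearLift, if_pos hx]
  exact hs.rescale_add_sub_rescale_eq h3 ha hx hb hb'

theorem semilinearLift_add_of_notMem_span_pair (hs : IsCollinearityPreserving K₁ K₂ s)
    (h3 : 3 ≤ Module.rank K₁ V₁) (ha : a ≠ 0) (hb : b ∉ K₁ ∙ a) {u v : V₁}
    (hv : v ∉ span K₁ {a, u}) :
    semilinearLift K₁ K₂ s a b (u + v) =
      semilinearLift K₁ K₂ s a b u + semilinearLift K₁ K₂ s a b v := by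
  have hva : v ∉ K₁ ∙ a := fun h => hv (span_singleton_le_span_pair a u h)
  by_cases hu : u ∈ K₁ ∙ a
  · rw [hs.semilinearLift_of_mem h3 ha hb hu hva,
      semilinearLift_of_notMem (by rwa [Submodule.add_mem_iff_right _ hu]),
      semilinearLift_of_notMem hva, sub_add_cancel]
  · rw [semilinearLift_of_notMem (add_notMem_span_singleton_of_notMem_span_pair hv),
      semilinearLift_of_notMem hu, semilinearLift_of_notMem hva, hs.rescale_add ha hu hv]

/-- If `v ∈ span {a, u}`, a vector `z` off that plane splits `u + v + z` in two ways, each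
covered by `semilinearLift_add_of_notMem_span_pair`. -/
theorem semilinearLift_add (hs : IsCollinearityPreserving K₁ K₂ s)
    (h3 : 3 ≤ Module.rank K₁ V₁) (ha : a ≠ 0) (hb : b ∉ K₁ ∙ a) (u v : V₁) :
    semilinearLift K₁ K₂ s a b (u + v) =
      semilinearLift K₁ K₂ s a b u + semilinearLift K₁ K₂ s a b v := by
  by_cases hv : v ∈ span K₁ {a, u}
  · obtain ⟨z, hz⟩ := exists_notMem_span_pair h3 a u
    have e₁ := hs.semilinearLift_add_of_notMem_span_pair h3 ha hb (u := u + v) fun h =>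
      hz (span_pair_le_of_mem (add_mem (subset_span (Set.mem_insert_of_mem _ rfl)) hv) h)
    have e₂ := hs.semilinearLift_add_of_notMem_span_pair h3 ha hb (u := u) (v := v + z) fun h =>
      hz (by simpa using sub_mem h hv)
    have e₃ := hs.semilinearLift_add_of_notMem_span_pair h3 ha hb (u := v) fun h =>
      hz (span_pair_le_of_mem hv h)
    rw [add_assoc, e₂, e₃, ← add_assoc] at e₁
    exact add_right_cancel e₁.symm
  · exact hs.semilinearLift_add_of_notMem_span_pair h3 ha hb hv

theorem semilinearLift_mem_span_pair (hs : IsCollinearityPreserving K₁ K₂ s)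
    (h3 : 3 ≤ Module.rank K₁ V₁) (ha : a ≠ 0) (hb : b ∉ K₁ ∙ a) (hx : x ∈ K₁ ∙ a) {b' : V₁}
    (hb' : b' ∉ K₁ ∙ a) : semilinearLift K₁ K₂ s a b x ∈ span K₂ {s a, s b'} := by
  have hxb' : x + b' ∉ K₁ ∙ a := by rwa [Submodule.add_mem_iff_right _ hx]
  rw [hs.semilinearLift_of_mem h3 ha hb hx hb']
  refine sub_mem ?_ (span_mono (Set.subset_insert _ _) (hs.rescale_spec ha hb').1)
  refine (span_singleton_le_iff_mem _ _).2 (hs.mem_span_pair_iff.1 ?_) (hs.rescale_spec ha hxb').1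
  exact add_mem (span_singleton_le_span_pair a b' hx) (subset_span (Set.mem_insert_of_mem _ rfl))

theorem semilinearLift_ne_zero_of_mem (hs : IsCollinearityPreserving K₁ K₂ s)
    (h3 : 3 ≤ Module.rank K₁ V₁) (ha : a ≠ 0) (hb : b ∉ K₁ ∙ a) (hx : x ∈ K₁ ∙ a)
    (hx₀ : x ≠ 0) : semilinearLift K₁ K₂ s a b x ≠ 0 := by
  have hxb : x + b ∉ K₁ ∙ a := by rwa [Submodule.add_mem_iff_right _ hx]
  rw [hs.semilinearLift_of_mem h3 ha hb hx hb, sub_ne_zero]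
  intro h
  have : s (x + b) ∈ K₂ ∙ s b := mem_span_singleton_trans
    (mem_span_singleton_comm (hs.rescale_ne_zero ha hxb) (hs.rescale_spec ha hxb).1)
    (h ▸ (hs.rescale_spec ha hb).1)
  rw [← hs.mem_span_singleton_iff, Submodule.add_mem_iff_left _ (mem_span_singleton_self b)] at this
  exact hb (mem_span_singleton_trans (mem_span_singleton_comm hx₀ this) hx)

theorem span_semilinearLift (hs : IsCollinearityPreserving K₁ K₂ s)
    (h3 : 3 ≤ Module.rank K₁ V₁) (ha : a ≠ 0) (hb : b ∉ K₁ ∙ a) (x : V₁) :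
    K₂ ∙ semilinearLift K₁ K₂ s a b x = K₂ ∙ s x := by
  by_cases hx : x ∈ K₁ ∙ a
  · rcases eq_or_ne x 0 with rfl | hx₀
    · simp [semilinearLift_zero, hs.map_zero]
    obtain ⟨b₂, hb₂⟩ := exists_notMem_span_pair h3 a b
    have hI : LinearIndependent K₁ ![a, b, b₂] := linearIndependent_triple_iff_notMem.2
      ⟨linearIndependent_pair_iff_notMem.2 ⟨ha, hb⟩, hb₂⟩
    have hmem := mem_span_singleton_of_mem_span_pair_of_mem_span_pair
      (hs.linearIndependent_triple hI) (hs.semilinearLift_mem_span_pair h3 ha hb hx hb)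
      (hs.semilinearLift_mem_span_pair h3 ha hb hx
        fun h => hb₂ (span_singleton_le_span_pair a b h))
    rw [span_singleton_eq_of_mem (hs.semilinearLift_ne_zero_of_mem h3 ha hb hx hx₀) hmem]
    exact (span_singleton_eq_of_mem (hs.ne_zero hx₀) (hs.mem_span_singleton_iff.1 hx)).symm
  · rw [semilinearLift_of_notMem hx]
    exact span_singleton_eq_of_mem (hs.rescale_ne_zero ha hx) (hs.rescale_spec ha hx).1

theorem exists_semilinearMap (hs : IsCollinearityPreserving K₁ K₂ s)
    (h3 : 3 ≤ Module.rank K₁ V₁) :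
    ∃ (μ : K₁ →+* K₂) (g : V₁ →ₛₗ[μ] V₂), ∀ x, K₂ ∙ g x = K₂ ∙ s x := by
  have h2 : 1 < Module.rank K₁ V₁ := lt_of_lt_of_le (by norm_num) h3
  obtain ⟨a, b, ha, hb⟩ := exists_ne_zero_notMem_span_singleton h2
  let g : V₁ →+ V₂ :=
    { toFun := semilinearLift K₁ K₂ s a b
      map_zero' := semilinearLift_zero
      map_add' := hs.semilinearLift_add h3 ha hb }
  have hg : ∀ x, K₂ ∙ g x = K₂ ∙ s x := hs.span_semilinearLift h3 ha hb
  obtain ⟨μ, hμ⟩ := exists_ringHom_map_smul h2 g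
    (fun x y hxy => (linearIndependent_pair_iff_of_span_singleton_eq (hg x) (hg y)).2
      (hs.linearIndependent_pair hxy))
    (fun c x => by
      rw [← span_singleton_le_iff_mem, hg, hg, span_singleton_le_iff_mem]
      exact hs.mem_span_singleton_iff.1 (smul_mem _ _ (mem_span_singleton_self x)))
  exact ⟨μ, { g with map_smul' := hμ }, hg⟩

end IsCollinearityPreserving

end Lift

namespace Projectivization

theorem eq_of_submodule_le {K V : Type*} [Field K] [AddCommGroup V] [Module K V] {p q : ℙ K V}
    (h : p.submodule ≤ q.submodule) : p = q := by
  induction p using ind with | h u hu =>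
  induction q using ind with | h v hv =>
  rw [submodule_mk, submodule_mk, span_singleton_le_iff_mem, mem_span_singleton] at h
  exact (mk_eq_mk_iff' K u v hu hv).2 h

variable {K₁ K₂ V₁ V₂ : Type*} [Field K₁] [Field K₂] [AddCommGroup V₁] [Module K₁ V₁]
  [AddCommGroup V₂] [Module K₂ V₂]

theorem submodule_le_sup_of_isLine (σ : ℙ K₁ V₁ ≃ ℙ K₂ V₂)
    (hl : ∀ s : Set (ℙ K₁ V₁), IsLine K₁ V₁ s → IsLine K₂ V₂ (σ '' s)) {p q r : ℙ K₁ V₁}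
    (h : p.submodule ≤ q.submodule ⊔ r.submodule) :
    (σ p).submodule ≤ (σ q).submodule ⊔ (σ r).submodule := by
  rcases eq_or_ne q r with rfl | hqr
  · rw [sup_idem] at h ⊢
    rw [eq_of_submodule_le h]
  set W := span K₁ {q.rep, r.rep}
  have hW : q.submodule ⊔ r.submodule = W := by rw [submodule_eq, submodule_eq, ← span_insert]
  obtain ⟨W', hW'2, himg⟩ :=
    hl {t | t.submodule ≤ W} ⟨W, finrank_span_pair (linearIndependent_pair_iff_ne.2 hqr), rfl⟩
  have hle : ∀ t : ℙ K₁ V₁, t.submodule ≤ W → (σ t).submodule ≤ W' := fun t ht => by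
    have : σ t ∈ σ '' {t | t.submodule ≤ W} := Set.mem_image_of_mem σ ht
    rwa [himg] at this
  have hrep : ∀ t : ℙ K₁ V₁, t.submodule ≤ W → (σ t).rep ∈ W' := fun t ht =>
    hle t ht (by rw [submodule_eq]; exact mem_span_singleton_self _)
  have hW' : W' = span K₂ {(σ q).rep, (σ r).rep} :=
    line_unique' (rep_nonzero _) (rep_nonzero _)
      (linearIndependent_pair_iff_ne.2 (σ.injective.ne hqr)) W' hW'2
      (hrep q (hW ▸ le_sup_left)) (hrep r (hW ▸ le_sup_right))
  rw [submodule_eq (σ q), submodule_eq (σ r), ← span_insert, ← hW']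
  exact hle p (hW ▸ h)

theorem submodule_le_sup_iff_of_isLine (σ : ℙ K₁ V₁ ≃ ℙ K₂ V₂)
    (hl : ∀ s : Set (ℙ K₁ V₁), IsLine K₁ V₁ s → IsLine K₂ V₂ (σ '' s))
    (hl' : ∀ s : Set (ℙ K₂ V₂), IsLine K₂ V₂ s → IsLine K₁ V₁ (σ.symm '' s)) {p q r : ℙ K₁ V₁} :
    (σ p).submodule ≤ (σ q).submodule ⊔ (σ r).submodule ↔
      p.submodule ≤ q.submodule ⊔ r.submodule :=
  ⟨fun h => by simpa using submodule_le_sup_of_isLine σ.symm hl' h,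
    submodule_le_sup_of_isLine σ hl⟩

open Classical in
noncomputable def vectorRep (σ : ℙ K₁ V₁ → ℙ K₂ V₂) (x : V₁) : V₂ :=
  if hx : x = 0 then 0 else (σ (mk K₁ x hx)).rep

@[simp]
theorem vectorRep_zero (σ : ℙ K₁ V₁ → ℙ K₂ V₂) : vectorRep σ 0 = 0 :=
  dif_pos rfl

theorem vectorRep_ne_zero (σ : ℙ K₁ V₁ → ℙ K₂ V₂) {x : V₁} (hx : x ≠ 0) : vectorRep σ x ≠ 0 := by
  rw [vectorRep, dif_neg hx]
  exact rep_nonzero _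

theorem span_vectorRep (σ : ℙ K₁ V₁ → ℙ K₂ V₂) {x : V₁} (hx : x ≠ 0) :
    K₂ ∙ vectorRep σ x = (σ (mk K₁ x hx)).submodule := by
  rw [vectorRep, dif_neg hx, submodule_eq]

theorem isCollinearityPreserving_vectorRep (σ : ℙ K₁ V₁ ≃ ℙ K₂ V₂)
    (hl : ∀ s : Set (ℙ K₁ V₁), IsLine K₁ V₁ s → IsLine K₂ V₂ (σ '' s))
    (hl' : ∀ s : Set (ℙ K₂ V₂), IsLine K₂ V₂ s → IsLine K₁ V₁ (σ.symm '' s)) :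
    IsCollinearityPreserving K₁ K₂ (vectorRep σ) := by
  have key : ∀ {x y z : V₁} (hx : x ≠ 0) (hy : y ≠ 0) (hz : z ≠ 0),
      z ∈ span K₁ {x, y} ↔ vectorRep σ z ∈ span K₂ {vectorRep σ x, vectorRep σ y} := by
    intro x y z hx hy hz
    rw [← span_singleton_le_iff_mem, ← span_singleton_le_iff_mem, span_insert, span_insert,
      span_vectorRep σ hx, span_vectorRep σ hy, span_vectorRep σ hz,
      submodule_le_sup_iff_of_isLine σ hl hl', submodule_mk, submodule_mk, submodule_mk]
  refine ⟨vectorRep_zero σ, fun {x y z} => ?_⟩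
  rcases eq_or_ne z 0 with rfl | hz
  · simp
  rcases eq_or_ne x 0 with rfl | hx <;> rcases eq_or_ne y 0 with rfl | hy
  · simp [hz, vectorRep_ne_zero σ hz]
  · simpa using key hy hy hz
  · simpa [Set.pair_comm _ (0 : V₁), Set.pair_comm _ (0 : V₂)] using key hx hx hz
  · exact key hx hy hz

theorem exists_semilinearMap_map_eq (h3 : 3 ≤ Module.rank K₁ V₁) (σ : ℙ K₁ V₁ ≃ ℙ K₂ V₂)
    (hl : ∀ s : Set (ℙ K₁ V₁), IsLine K₁ V₁ s → IsLine K₂ V₂ (σ '' s))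
    (hl' : ∀ s : Set (ℙ K₂ V₂), IsLine K₂ V₂ s → IsLine K₁ V₁ (σ.symm '' s)) :
    ∃ (μ : K₁ →+* K₂) (g : V₁ →ₛₗ[μ] V₂) (hg : Function.Injective g), map g hg = σ := by
  have hs := isCollinearityPreserving_vectorRep σ hl hl'
  obtain ⟨μ, g, hg⟩ := hs.exists_semilinearMap h3
  have hinj : Function.Injective g := (injective_iff_map_eq_zero g).2 fun x hx => by
    by_contra hx₀
    exact hs.ne_zero hx₀ (by simpa [hx] using (hg x).symm)
  refine ⟨μ, g, hinj, funext fun p => ?_⟩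
  induction p using ind with | h x hx =>
  exact submodule_injective (by rw [map_mk, submodule_mk, hg, span_vectorRep σ hx])

end Projectivization

/-- **Fundamental theorem of projective geometry.** Let `V_i` be a `k_i`-vector space of
dimension `≥ 3` (`i = 1, 2`) and let `σ : ℙ(V₁) → ℙ(V₂)` be a bijection carrying lines
onto lines (a collineation).  Then `σ` is induced by a field isomorphism `μ : k₁ → k₂`
together with a `μ`-semilinear additive bijection `λ : V₁ → V₂`; moreover `μ` is unique
and `λ` is unique up to precomposition with multiplication by a unique scalar
`a ∈ k₁^×`. -/
theorem fundamental_theorem_projective_geometry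
    (k₁ k₂ V₁ V₂ : Type*) [Field k₁] [Field k₂]
    [AddCommGroup V₁] [Module k₁ V₁] [AddCommGroup V₂] [Module k₂ V₂]
    (hd₁ : 3 ≤ Module.rank k₁ V₁) (hd₂ : 3 ≤ Module.rank k₂ V₂)
    (σ : ℙ k₁ V₁ ≃ ℙ k₂ V₂)
    (hl : ∀ s : Set (ℙ k₁ V₁), IsLine k₁ V₁ s → IsLine k₂ V₂ (σ '' s))
    (hl' : ∀ s : Set (ℙ k₂ V₂), IsLine k₂ V₂ s → IsLine k₁ V₁ (σ.symm '' s)) :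
    ∃ (μ : k₁ ≃+* k₂) (e : V₁ ≃+ V₂),
      (∀ (a : k₁) (x : V₁), e (a • x) = μ a • e x) ∧
      (∀ (x : V₁) (hx : x ≠ 0),
        σ (Projectivization.mk k₁ x hx) =
          Projectivization.mk k₂ (e x)
            (fun h => hx (by rw [← e.symm_apply_apply x, h, map_zero]))) ∧
      ∀ (μ' : k₁ ≃+* k₂) (e' : V₁ ≃+ V₂),
        (∀ (a : k₁) (x : V₁), e' (a • x) = μ' a • e' x) →
        (∀ (x : V₁) (hx : x ≠ 0),
          σ (Projectivization.mk k₁ x hx) =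
            Projectivization.mk k₂ (e' x)
              (fun h => hx (by rw [← e'.symm_apply_apply x, h, map_zero]))) →
        μ' = μ ∧ ∃! a : k₁ˣ, ∀ x : V₁, e' x = e ((a : k₁) • x) := by
  obtain ⟨μ, g, hg, hgσ⟩ := Projectivization.exists_semilinearMap_map_eq hd₁ σ hl hl'
  obtain ⟨μ', g', hg', hgσ'⟩ :=
    Projectivization.exists_semilinearMap_map_eq hd₂ σ.symm hl' (by simpa using hl)
  obtain ⟨hμ, hgbij⟩ := bijective_of_map_comp_map_eq_id (lt_of_lt_of_le (by norm_num) hd₂)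
    g g' hg hg' fun p => by rw [hgσ, hgσ', σ.apply_symm_apply]
  let e : V₁ ≃+ V₂ := AddEquiv.ofBijective g.toAddMonoidHom hgbij
  have he : ∀ (x : V₁) (hx : x ≠ 0),
      σ (Projectivization.mk k₁ x hx) =
        Projectivization.mk k₂ (e x) ((map_ne_zero_iff g hg).2 hx) := by
    intro x hx
    rw [← hgσ]
    rfl
  refine ⟨RingEquiv.ofBijective μ hμ, e, g.map_smulₛₗ, he, fun μ'' e'' hsemi hind =>
    eq_and_existsUnique_smul_of_mem_span_singleton (lt_of_lt_of_le (by norm_num) hd₁)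
      g.map_smulₛₗ hsemi fun x => ?_⟩
  rcases eq_or_ne x 0 with rfl | hx
  · simp
  · exact Projectivization.mem_span_singleton_of_mk_eq_mk ((hind x hx).symm.trans (he x hx))
end

section
/- (Desargues' theorem in ℙ(V)) Let k be a field, V a k-vector space, and p₁, p₂, p₃, q₁, q₂, q₃ ∈ ℙ(V) such that p₁, p₂, p₃ are not collinear, q₁, q₂, q₃ are not collinear, and p_i ≠ q_i for i = 1, 2, 3. Then the three lines p₁∨q₁, p₂∨q₂, p₃∨q₃ are concurrent if and only if the three intersection points (p₂∨p₃)∩(q₂∨q₃), (p₃∨p₁)∩(q₃∨q₁), (p₁∨p₂)∩(q₁∨q₂) exist and are collinear. -/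
open scoped LinearAlgebra.Projectivization

/-- The line `p ∨ q` of `ℙ K V` through two (distinct) points `p, q`. -/
def projJoin (K V : Type*) [Field K] [AddCommGroup V] [Module K V]
    (p q : ℙ K V) : Set (ℙ K V) :=
  {x : ℙ K V | x.submodule ≤ p.submodule ⊔ q.submodule}

/-- A set of points of `ℙ K V` is collinear if all its points lie in a common subspace of
dimension at most `2` (i.e. on a common line). -/
def ProjCollinear (K V : Type*) [Field K] [AddCommGroup V] [Module K V]
    (s : Set (ℙ K V)) : Prop :=
  ∃ W : Submodule K V, Module.rank K W ≤ 2 ∧ ∀ x ∈ s, x.submodule ≤ W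

/-!
Lift everything to representative vectors. If `x = aᵢ pᵢ + bᵢ qᵢ` lies on the three lines
`pᵢ ∨ qᵢ`, then `r₁ = a₂ p₂ - a₃ p₃ = b₃ q₃ - b₂ q₂` lies on `p₂ ∨ p₃` and on `q₂ ∨ q₃`
(cyclically), and `r₁ + r₂ + r₃ = 0`. Conversely, scale representatives of the `rᵢ` so that
`r₁ + r₂ + r₃ = 0`; independence of the `pᵢ` forces `r₁ = α₂ p₂ - α₃ p₃` (cyclically), likewise
`r₁ = β₂ q₂ - β₃ q₃`, and then `αᵢ pᵢ - βᵢ qᵢ` does not depend on `i`: it is the common point.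
-/

section

open Submodule Projectivization

variable {k V : Type*} [Field k] [AddCommGroup V] [Module k V]

lemma mk_mem_projJoin_iff {w : V} (hw : w ≠ 0) {p q : ℙ k V} :
    mk k w hw ∈ projJoin k V p q ↔ w ∈ span k {p.rep, q.rep} := by
  change (mk k w hw).submodule ≤ _ ↔ _
  rw [submodule_mk, span_singleton_le_iff_mem, submodule_eq,
    submodule_eq, ← span_union, Set.singleton_union]

lemma mem_projJoin_iff {x p q : ℙ k V} :
    x ∈ projJoin k V p q ↔ x.rep ∈ span k {p.rep, q.rep} := by
  conv_lhs => rw [← x.mk_rep]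
  exact mk_mem_projJoin_iff x.rep_nonzero

lemma eq_zero_of_smul_rep_eq_smul_rep {p q : ℙ k V} (h : p ≠ q) {a b : k}
    (hab : a • p.rep = b • q.rep) : a = 0 ∧ b = 0 := by
  have hpq := (independent_mk_iff_LinearIndependent (K := k) p.rep_nonzero q.rep_nonzero).1
    (by simpa using h)
  simpa using LinearIndependent.pair_iff.1 hpq a (-b) (by rw [hab, neg_smul, add_neg_cancel])

lemma smul_rep_sub_smul_rep_ne_zero {p p' q q' : ℙ k V} (hp : p ≠ p') (hq : q ≠ q')
    {a b a' b' : k} (h : a • p.rep + b • q.rep = a' • p'.rep + b' • q'.rep)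
    (hne : a • p.rep + b • q.rep ≠ 0) : a • p.rep - a' • p'.rep ≠ 0 := by
  intro h0
  obtain ⟨rfl, rfl⟩ := eq_zero_of_smul_rep_eq_smul_rep hp (sub_eq_zero.1 h0)
  simp only [zero_smul, zero_add] at h hne
  obtain ⟨rfl, -⟩ := eq_zero_of_smul_rep_eq_smul_rep hq h
  exact hne (zero_smul k _)

lemma rank_span_range_le_two_iff {u v w : V} :
    Module.rank k (span k (Set.range ![u, v, w])) ≤ 2 ↔ ¬ LinearIndependent k ![u, v, w] := by
  have hfin := FiniteDimensional.span_of_finite k (Set.finite_range ![u, v, w])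
  have hle := finrank_range_le_card (R := k) ![u, v, w]
  rw [Fintype.card_fin, Set.finrank] at hle
  rw [linearIndependent_iff_card_eq_finrank_span, ← Module.finrank_eq_rank, Fintype.card_fin,
    Set.finrank]
  norm_cast
  omega

lemma projCollinear_mk_iff {u v w : V} (hu : u ≠ 0) (hv : v ≠ 0) (hw : w ≠ 0) :
    ProjCollinear k V {mk k u hu, mk k v hv, mk k w hw} ↔ ¬ LinearIndependent k ![u, v, w] := by
  rw [← rank_span_range_le_two_iff]
  constructor
  · rintro ⟨W, hW, hsub⟩
    refine le_trans (rank_mono ?_) hW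
    rw [span_le]
    rintro _ ⟨i, rfl⟩
    have hmem : ∀ (x : V) (hx : x ≠ 0), mk k x hx ∈ ({mk k u hu, mk k v hv, mk k w hw} : Set _) →
        x ∈ W := fun x hx hxs => by
      simpa only [submodule_mk, span_singleton_le_iff_mem] using hsub _ hxs
    fin_cases i
    exacts [hmem u hu (by simp), hmem v hv (by simp), hmem w hw (by simp)]
  · refine fun h => ⟨_, h, ?_⟩
    rintro _ (rfl | rfl | rfl) <;> rw [submodule_mk, span_singleton_le_iff_mem] <;>
      exact subset_span (by simp)

lemma projCollinear_iff_not_linearIndependent {a b c : ℙ k V} :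
    ProjCollinear k V {a, b, c} ↔ ¬ LinearIndependent k ![a.rep, b.rep, c.rep] := by
  simpa only [mk_rep] using projCollinear_mk_iff (k := k) a.rep_nonzero b.rep_nonzero c.rep_nonzero

lemma linearIndependent_rep_of_not_projCollinear {a b c : ℙ k V}
    (h : ¬ ProjCollinear k V {a, b, c}) : LinearIndependent k ![a.rep, b.rep, c.rep] :=
  not_not.1 (projCollinear_iff_not_linearIndependent.not.1 h)

lemma ne_of_not_projCollinear {a b c : ℙ k V} (h : ¬ ProjCollinear k V {a, b, c}) :
    a ≠ b ∧ b ≠ c ∧ c ≠ a := by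
  have hli := linearIndependent_rep_of_not_projCollinear h
  refine ⟨?_, ?_, ?_⟩ <;> rintro rfl
  exacts [hli.injective.ne (by decide : (0 : Fin 3) ≠ 1) rfl,
    hli.injective.ne (by decide : (1 : Fin 3) ≠ 2) rfl,
    hli.injective.ne (by decide : (2 : Fin 3) ≠ 0) rfl]

lemma exists_cyclic_decomposition {u₁ u₂ u₃ R₁ R₂ R₃ : V}
    (hu : LinearIndependent k ![u₁, u₂, u₃]) (h₁ : R₁ ∈ span k {u₂, u₃})
    (h₂ : R₂ ∈ span k {u₃, u₁}) (h₃ : R₃ ∈ span k {u₁, u₂}) (hR : R₁ + R₂ + R₃ = 0) :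
    ∃ a₁ a₂ a₃ : k, R₁ = a₂ • u₂ - a₃ • u₃ ∧ R₂ = a₃ • u₃ - a₁ • u₁ ∧
      R₃ = a₁ • u₁ - a₂ • u₂ := by
  obtain ⟨s₂, s₃, rfl⟩ := mem_span_pair.1 h₁
  obtain ⟨t₃, t₁, rfl⟩ := mem_span_pair.1 h₂
  obtain ⟨c₁, c₂, rfl⟩ := mem_span_pair.1 h₃
  have hcoeff := Fintype.linearIndependent_iff.1 hu ![t₁ + c₁, s₂ + c₂, s₃ + t₃] (by
    simp only [Fin.sum_univ_three, Matrix.cons_val_zero, Matrix.cons_val_one, Matrix.cons_val_two,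
      Matrix.head_cons, Matrix.tail_cons]
    linear_combination (norm := module) hR)
  have hc₁ : c₁ = -t₁ := eq_neg_of_add_eq_zero_right (hcoeff 0)
  have hc₂ : c₂ = -s₂ := eq_neg_of_add_eq_zero_right (hcoeff 1)
  have hs₃ : s₃ = -t₃ := eq_neg_of_add_eq_zero_left (hcoeff 2)
  subst hc₁ hc₂ hs₃
  exact ⟨-t₁, s₂, t₃, by module, by module, by module⟩

theorem projCollinear_of_concurrent {p₁ p₂ p₃ q₁ q₂ q₃ : ℙ k V}
    (hp₁₂ : p₁ ≠ p₂) (hp₂₃ : p₂ ≠ p₃) (hp₃₁ : p₃ ≠ p₁)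
    (hq₁₂ : q₁ ≠ q₂) (hq₂₃ : q₂ ≠ q₃) (hq₃₁ : q₃ ≠ q₁)
    (h : (projJoin k V p₁ q₁ ∩ projJoin k V p₂ q₂ ∩ projJoin k V p₃ q₃).Nonempty) :
    ∃ r₁ r₂ r₃ : ℙ k V,
      r₁ ∈ projJoin k V p₂ p₃ ∩ projJoin k V q₂ q₃ ∧
      r₂ ∈ projJoin k V p₃ p₁ ∩ projJoin k V q₃ q₁ ∧
      r₃ ∈ projJoin k V p₁ p₂ ∩ projJoin k V q₁ q₂ ∧
      ProjCollinear k V {r₁, r₂, r₃} := by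
  obtain ⟨x, ⟨hx₁, hx₂⟩, hx₃⟩ := h
  obtain ⟨a₁, b₁, e₁⟩ := mem_span_pair.1 (mem_projJoin_iff.1 hx₁)
  obtain ⟨a₂, b₂, e₂⟩ := mem_span_pair.1 (mem_projJoin_iff.1 hx₂)
  obtain ⟨a₃, b₃, e₃⟩ := mem_span_pair.1 (mem_projJoin_iff.1 hx₃)
  have hr₁ := smul_rep_sub_smul_rep_ne_zero hp₂₃ hq₂₃ (e₂.trans e₃.symm) (e₂ ▸ x.rep_nonzero)
  have hr₂ := smul_rep_sub_smul_rep_ne_zero hp₃₁ hq₃₁ (e₃.trans e₁.symm) (e₃ ▸ x.rep_nonzero)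
  have hr₃ := smul_rep_sub_smul_rep_ne_zero hp₁₂ hq₁₂ (e₁.trans e₂.symm) (e₁ ▸ x.rep_nonzero)
  have hcol : ProjCollinear k V {mk k _ hr₁, mk k _ hr₂, mk k _ hr₃} := by
    rw [projCollinear_mk_iff]
    intro hli
    exact one_ne_zero <|
      Fintype.linearIndependent_iff.1 hli (fun _ => 1) (by simp [Fin.sum_univ_three]) 0
  refine ⟨_, _, _, ⟨?_, ?_⟩, ⟨?_, ?_⟩, ⟨?_, ?_⟩, hcol⟩ <;> rw [mk_mem_projJoin_iff, mem_span_pair]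
  exacts [⟨a₂, -a₃, by module⟩, ⟨-b₂, b₃, by linear_combination (norm := module) e₃ - e₂⟩,
    ⟨a₃, -a₁, by module⟩, ⟨-b₃, b₁, by linear_combination (norm := module) e₁ - e₃⟩,
    ⟨a₁, -a₂, by module⟩, ⟨-b₁, b₂, by linear_combination (norm := module) e₂ - e₁⟩]

theorem concurrent_of_projCollinear {p₁ p₂ p₃ q₁ q₂ q₃ : ℙ k V}
    (hp : ¬ ProjCollinear k V {p₁, p₂, p₃}) (hq : ¬ ProjCollinear k V {q₁, q₂, q₃})
    (h₁ : p₁ ≠ q₁) (h₂ : p₂ ≠ q₂) (h₃ : p₃ ≠ q₃)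
    (h : ∃ r₁ r₂ r₃ : ℙ k V,
      r₁ ∈ projJoin k V p₂ p₃ ∩ projJoin k V q₂ q₃ ∧
      r₂ ∈ projJoin k V p₃ p₁ ∩ projJoin k V q₃ q₁ ∧
      r₃ ∈ projJoin k V p₁ p₂ ∩ projJoin k V q₁ q₂ ∧
      ProjCollinear k V {r₁, r₂, r₃}) :
    (projJoin k V p₁ q₁ ∩ projJoin k V p₂ q₂ ∩ projJoin k V p₃ q₃).Nonempty := by
  obtain ⟨r₁, r₂, r₃, ⟨hr₁p, hr₁q⟩, ⟨hr₂p, hr₂q⟩, ⟨hr₃p, hr₃q⟩, hcol⟩ := h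
  obtain ⟨g, hg, i, hgi⟩ :=
    Fintype.not_linearIndependent_iff.1 (projCollinear_iff_not_linearIndependent.1 hcol)
  simp only [Fin.sum_univ_three, Matrix.cons_val_zero, Matrix.cons_val_one, Matrix.cons_val_two,
    Matrix.head_cons, Matrix.tail_cons] at hg
  have hmem {x p q : ℙ k V} (c : k) (hx : x ∈ projJoin k V p q) :
      c • x.rep ∈ span k {p.rep, q.rep} :=
    smul_mem _ c (mem_projJoin_iff.1 hx)
  obtain ⟨α₁, α₂, α₃, eα₁, eα₂, eα₃⟩ := exists_cyclic_decomposition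
    (linearIndependent_rep_of_not_projCollinear hp)
    (hmem (g 0) hr₁p) (hmem (g 1) hr₂p) (hmem (g 2) hr₃p) hg
  obtain ⟨β₁, β₂, β₃, eβ₁, eβ₂, eβ₃⟩ := exists_cyclic_decomposition
    (linearIndependent_rep_of_not_projCollinear hq)
    (hmem (g 0) hr₁q) (hmem (g 1) hr₂q) (hmem (g 2) hr₃q) hg
  have hx₂ : α₂ • p₂.rep - β₂ • q₂.rep = α₁ • p₁.rep - β₁ • q₁.rep := by
    linear_combination (norm := module) eα₃ - eβ₃
  have hx₃ : α₃ • p₃.rep - β₃ • q₃.rep = α₁ • p₁.rep - β₁ • q₁.rep := by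
    linear_combination (norm := module) eβ₂ - eα₂
  have hx : α₁ • p₁.rep - β₁ • q₁.rep ≠ 0 := by
    intro hx0
    have hα {p q : ℙ k V} {α β : k} (hpq : p ≠ q) (h : α • p.rep - β • q.rep = 0) : α = 0 :=
      (eq_zero_of_smul_rep_eq_smul_rep hpq (sub_eq_zero.1 h)).1
    have hα₁ := hα h₁ hx0
    have hα₂ := hα h₂ (hx₂.trans hx0)
    have hα₃ := hα h₃ (hx₃.trans hx0)
    have hg0 : ∀ j, g j = 0 := by
      intro j
      fin_cases j
      exacts [(smul_eq_zero.1 (by simp [eα₁, hα₂, hα₃])).resolve_right r₁.rep_nonzero,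
        (smul_eq_zero.1 (by simp [eα₂, hα₃, hα₁])).resolve_right r₂.rep_nonzero,
        (smul_eq_zero.1 (by simp [eα₃, hα₁, hα₂])).resolve_right r₃.rep_nonzero]
    exact hgi (hg0 i)
  refine ⟨mk k _ hx, ⟨?_, ?_⟩, ?_⟩ <;> rw [mk_mem_projJoin_iff, mem_span_pair]
  exacts [⟨α₁, -β₁, by module⟩, ⟨α₂, -β₂, by rw [← hx₂]; module⟩,
    ⟨α₃, -β₃, by rw [← hx₃]; module⟩]

end

/-- **Desargues' theorem** in `ℙ(V)`.  Given two triangles `p₁p₂p₃` and `q₁q₂q₃` with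
`p_i ≠ q_i`, the lines `p₁∨q₁`, `p₂∨q₂`, `p₃∨q₃` are concurrent if and only if the
intersection points `(p₂∨p₃)∩(q₂∨q₃)`, `(p₃∨p₁)∩(q₃∨q₁)`, `(p₁∨p₂)∩(q₁∨q₂)` exist and
are collinear. -/
theorem desargues (k V : Type*) [Field k] [AddCommGroup V] [Module k V]
    (p₁ p₂ p₃ q₁ q₂ q₃ : ℙ k V)
    (hp : ¬ ProjCollinear k V {p₁, p₂, p₃}) (hq : ¬ ProjCollinear k V {q₁, q₂, q₃})
    (h1 : p₁ ≠ q₁) (h2 : p₂ ≠ q₂) (h3 : p₃ ≠ q₃) :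
    (projJoin k V p₁ q₁ ∩ projJoin k V p₂ q₂ ∩ projJoin k V p₃ q₃).Nonempty ↔
      ∃ r₁ r₂ r₃ : ℙ k V,
        r₁ ∈ projJoin k V p₂ p₃ ∩ projJoin k V q₂ q₃ ∧
        r₂ ∈ projJoin k V p₃ p₁ ∩ projJoin k V q₃ q₁ ∧
        r₃ ∈ projJoin k V p₁ p₂ ∩ projJoin k V q₁ q₂ ∧
        ProjCollinear k V {r₁, r₂, r₃} := by
  obtain ⟨hp₁₂, hp₂₃, hp₃₁⟩ := ne_of_not_projCollinear hp
  obtain ⟨hq₁₂, hq₂₃, hq₃₁⟩ := ne_of_not_projCollinear hq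
  exact ⟨projCollinear_of_concurrent hp₁₂ hp₂₃ hp₃₁ hq₁₂ hq₂₃ hq₃₁,
    concurrent_of_projCollinear hp hq h1 h2 h3⟩
end
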